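/- arXiv:1703.04097 — 7 statements merged into one kernel-verified Lean document; each statement's English description precedes it below -/
import Mathlib

section
/- The canonical bristled module C has no submodule with dimension vector (2,1): there is no pair of subspaces U₁ ⊆ C₁, U₂ ⊆ C₂ with dim U₁ = 2, dim U₂ = 1 and α_i(U₁) ⊆ U₂ for all i = 1, …, n. -/
/-!
The canonical bristled `n`-Kronecker module `C = (C₁, C₂; α₁, …, α_n)`:
`C₂ = Fin n → k` with standard basis `c_i`, and `C₁ = Sym2 (Fin n) → k` with
standard basis `c_{ij}` indexed by unordered pairs `{i,j}`.
`α_r` is given by `(α_r x) i = x {i, r}`, i.e. `α_r(c_{ij}) = c_j` if `r = i`,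
`c_i` if `r = j`, and `0` if `r ∉ {i,j}`.

If `U₂` is spanned by `v`, then for `x ∈ U₁` every column `i ↦ x {i, r} = (α_r x) i` is a multiple
`c_r v` of `v`. Symmetry of `x` gives `c_r v_j = c_j v_r`, so `x` is a multiple of the symmetric
square `{i, r} ↦ v_i v_r`. Hence `U₂` of dimension at most one forces `U₁` to have dimension at most
one as well.
-/

def canAlpha (k : Type*) [Field k] (n : ℕ) (r : Fin n) :
    (Sym2 (Fin n) → k) →ₗ[k] (Fin n → k) where
  toFun x i := x (Sym2.mk i r)
  map_add' _ _ := rfl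
  map_smul' _ _ := rfl

section

variable {k : Type*} [Field k]

def symSquare {ι : Type*} (v : ι → k) : Sym2 ι → k :=
  Sym2.lift ⟨fun i j => v i * v j, fun _ _ => mul_comm _ _⟩

@[simp]
theorem symSquare_mk {ι : Type*} (v : ι → k) (i j : ι) : symSquare v s(i, j) = v i * v j :=
  rfl

@[simp]
theorem canAlpha_apply {n : ℕ} (r : Fin n) (x : Sym2 (Fin n) → k) (i : Fin n) :
    canAlpha k n r x i = x s(i, r) :=
  rfl

theorem exists_eq_smul_symSquare {ι : Type*} {v : ι → k} {x : Sym2 ι → k}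
    (hx : ∀ r, ∃ c : k, ∀ i, x s(i, r) = c * v i) : ∃ a : k, x = a • symSquare v := by
  choose c hc using hx
  by_cases hv : v = 0
  · refine ⟨0, funext fun p => ?_⟩
    induction p using Sym2.ind with
    | _ i r => simp [hc r i, hv]
  obtain ⟨j, hj⟩ : ∃ j, v j ≠ 0 := Function.ne_iff.mp hv
  refine ⟨c j / v j, funext fun p => ?_⟩
  induction p using Sym2.ind with
  | _ i r =>
    have hsymm : c r * v j = c j * v r := by rw [← hc r j, ← hc j r, Sym2.eq_swap]
    rw [hc r i, Pi.smul_apply, symSquare_mk, smul_eq_mul]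
    field_simp
    linear_combination v i * hsymm

theorem le_span_symSquare_of_map_canAlpha_le {n : ℕ} {U₁ : Submodule k (Sym2 (Fin n) → k)}
    {v : Fin n → k} (h : ∀ r, U₁.map (canAlpha k n r) ≤ k ∙ v) : U₁ ≤ k ∙ symSquare v := by
  intro x hx
  rw [Submodule.mem_span_singleton]
  obtain ⟨a, rfl⟩ := exists_eq_smul_symSquare fun r => by
    obtain ⟨c, hc⟩ := Submodule.mem_span_singleton.mp (h r ⟨x, hx, rfl⟩)
    exact ⟨c, fun i => by simpa using (congrFun hc i).symm⟩
  exact ⟨a, rfl⟩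

theorem finrank_le_one_of_map_canAlpha_le {n : ℕ} {U₁ : Submodule k (Sym2 (Fin n) → k)}
    {U₂ : Submodule k (Fin n → k)} (hU₂ : Module.finrank k U₂ ≤ 1)
    (h : ∀ r, U₁.map (canAlpha k n r) ≤ U₂) : Module.finrank k U₁ ≤ 1 := by
  obtain ⟨v, rfl⟩ := (U₂.finrank_le_one_iff_isPrincipal.mp hU₂).principal
  calc Module.finrank k U₁
      ≤ Module.finrank k (k ∙ symSquare v) :=
        Submodule.finrank_mono (le_span_symSquare_of_map_canAlpha_le h)
    _ ≤ 1 := (Submodule.finrank_le_one_iff_isPrincipal _).mpr ⟨⟨_, rfl⟩⟩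

end

theorem no_submodule_of_dimension_vector_two_one_general
    {k : Type*} [Field k] {n : ℕ} :
    ¬ ∃ (U₁ : Submodule k (Sym2 (Fin n) → k)) (U₂ : Submodule k (Fin n → k)),
        Module.finrank k U₁ = 2 ∧ Module.finrank k U₂ = 1 ∧
        ∀ r, U₁.map (canAlpha k n r) ≤ U₂ := by
  rintro ⟨U₁, U₂, h₁, h₂, hmap⟩
  have := finrank_le_one_of_map_canAlpha_le h₂.le hmap
  omega

/-- The canonical bristled module `C` has no submodule with
dimension vector `(2,1)`: there is no pair of subspaces `U₁ ⊆ C₁`, `U₂ ⊆ C₂`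
with `dim U₁ = 2`, `dim U₂ = 1` and `α_r(U₁) ⊆ U₂` for all `r`. -/
theorem no_submodule_of_dimension_vector_two_one
    {k : Type*} [Field k] {n : ℕ} (hn : 1 ≤ n) :
    ¬ ∃ (U₁ : Submodule k (Sym2 (Fin n) → k)) (U₂ : Submodule k (Fin n → k)),
        Module.finrank k U₁ = 2 ∧ Module.finrank k U₂ = 1 ∧
        ∀ r, U₁.map (canAlpha k n r) ≤ U₂ :=
  no_submodule_of_dimension_vector_two_one_general
end

section
/- The endomorphism ring of the canonical bristled module C is k: if f₁ : C₁ → C₁ and f₂ : C₂ → C₂ are k-linear maps satisfying f₂ ∘ α_i = α_i ∘ f₁ for all i = 1, …, n, then there exists a scalar μ ∈ k such that f₁ = μ·id_{C₁} and f₂ = μ·id_{C₂}. In particular, C is an indecomposable n-Kronecker module. -/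
/-!
Since `(α_r x)(a) = x{a, r}`, the relation `f₂ ∘ α_r = α_r ∘ f₁` reads
`(f₁ x){a, r} = f₂(α_r x)(a)`: `f₁` is determined by `f₂`, and `f₂ = μ • id` forces
`f₁ = μ • id`. Feeding in basis vectors, `α_a c_{ii} = 0` for `a ≠ i` makes `f₂ c_i` a multiple
`μ_i c_i`, and reading `(f₁ c_{ij}){i, j}` through `α_j` and through `α_i` gives `μ_i = μ_j`.
For indecomposability, the projections attached to a decomposition `C = U ⊕ W` form an
endomorphism of `C`, hence equal `μ • id`; then `μ = 0` kills `U` and `μ ≠ 0` kills `W`.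
-/

namespace Submodule

variable {R E F : Type*} [Ring R] [AddCommGroup E] [Module R E] [AddCommGroup F] [Module R F]
  {p q : Submodule R E} {p' q' : Submodule R F}

theorem projection_comp_eq_comp_projection (hpq : IsCompl p q) (hpq' : IsCompl p' q')
    (f : E →ₗ[R] F) (hp : p.map f ≤ p') (hq : q.map f ≤ q') :
    p'.projection q' hpq' ∘ₗ f = f ∘ₗ p.projection q hpq := by
  ext x
  have hp' : f (p.projection q hpq x) ∈ p' := hp (mem_map_of_mem (projection_apply_mem hpq x))
  have hq' : f (q.projection p hpq.symm x) ∈ q' :=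
    hq (mem_map_of_mem (projection_apply_mem hpq.symm x))
  conv_lhs => rw [← projection_add_projection_eq_self hpq x]
  simp [projection_apply_of_mem_left hpq' hp', projection_apply_of_mem_right hpq' hq']

theorem eq_bot_of_projection_eq_zero (hpq : IsCompl p q) (h : p.projection q hpq = 0) :
    p = ⊥ := by
  rw [← range_projection hpq, h, LinearMap.range_zero]

theorem eq_bot_of_projection_eq_smul_id {K V : Type*} [Field K] [AddCommGroup V] [Module K V]
    {p q : Submodule K V} (hpq : IsCompl p q) {μ : K} (hμ : μ ≠ 0)
    (h : p.projection q hpq = μ • LinearMap.id) : q = ⊥ := by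
  rw [← ker_projection hpq, h, LinearMap.ker_smul _ _ hμ, LinearMap.ker_id]

end Submodule

namespace Kronecker

variable {K ι V₁ V₂ : Type*} [Field K] [AddCommGroup V₁] [Module K V₁] [AddCommGroup V₂]
  [Module K V₂]

def HasOnlyScalarEndomorphisms (α : ι → V₁ →ₗ[K] V₂) : Prop :=
  ∀ (f₁ : V₁ →ₗ[K] V₁) (f₂ : V₂ →ₗ[K] V₂), (∀ i, f₂ ∘ₗ α i = α i ∘ₗ f₁) →
    ∃ μ : K, f₁ = μ • LinearMap.id ∧ f₂ = μ • LinearMap.id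

theorem HasOnlyScalarEndomorphisms.eq_bot_or_eq_bot {α : ι → V₁ →ₗ[K] V₂}
    (hα : HasOnlyScalarEndomorphisms α) {U₁ W₁ : Submodule K V₁} {U₂ W₂ : Submodule K V₂}
    (h₁ : IsCompl U₁ W₁) (h₂ : IsCompl U₂ W₂) (hU : ∀ i, U₁.map (α i) ≤ U₂)
    (hW : ∀ i, W₁.map (α i) ≤ W₂) :
    (U₁ = ⊥ ∧ U₂ = ⊥) ∨ (W₁ = ⊥ ∧ W₂ = ⊥) := by
  obtain ⟨μ, hμ₁, hμ₂⟩ := hα _ _ fun i =>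
    Submodule.projection_comp_eq_comp_projection h₁ h₂ (α i) (hU i) (hW i)
  rcases eq_or_ne μ 0 with rfl | hμ
  · rw [zero_smul] at hμ₁ hμ₂
    exact .inl ⟨Submodule.eq_bot_of_projection_eq_zero h₁ hμ₁,
      Submodule.eq_bot_of_projection_eq_zero h₂ hμ₂⟩
  · exact .inr ⟨Submodule.eq_bot_of_projection_eq_smul_id h₁ hμ hμ₁,
      Submodule.eq_bot_of_projection_eq_smul_id h₂ hμ hμ₂⟩

end Kronecker

namespace CanonicalBristled

variable {k : Type*} [Field k] {n : ℕ}

theorem canAlpha_apply (r : Fin n) (x : Sym2 (Fin n) → k) (a : Fin n) :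
    canAlpha k n r x a = x s(a, r) := rfl

theorem canAlpha_single_right (i j : Fin n) (c : k) :
    canAlpha k n j (Pi.single s(i, j) c) = Pi.single i c := by
  ext a
  simp only [canAlpha_apply, Pi.single_apply, Sym2.congr_left]

theorem canAlpha_single_of_ne {i j r : Fin n} (hri : r ≠ i) (hrj : r ≠ j) (c : k) :
    canAlpha k n r (Pi.single s(i, j) c) = 0 := by
  ext a
  have : s(a, r) ≠ s(i, j) := fun h => by
    rcases Sym2.mem_iff.mp (h ▸ Sym2.mem_mk_right a r) with h | h
    exacts [hri h, hrj h]
  simp [canAlpha_apply, this]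

variable {f₁ : (Sym2 (Fin n) → k) →ₗ[k] (Sym2 (Fin n) → k)} {f₂ : (Fin n → k) →ₗ[k] (Fin n → k)}

theorem apply_canAlpha_apply (h : ∀ i, f₂ ∘ₗ canAlpha k n i = canAlpha k n i ∘ₗ f₁)
    (r : Fin n) (x : Sym2 (Fin n) → k) (a : Fin n) :
    f₂ (canAlpha k n r x) a = f₁ x s(a, r) :=
  congrFun (LinearMap.congr_fun (h r) x) a

theorem endo₂_single_apply_of_ne (h : ∀ i, f₂ ∘ₗ canAlpha k n i = canAlpha k n i ∘ₗ f₁)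
    {i a : Fin n} (hai : a ≠ i) : f₂ (Pi.single i 1) a = 0 :=
  calc f₂ (Pi.single i 1) a
      = f₁ (Pi.single s(i, i) 1) s(a, i) := by
        rw [← canAlpha_single_right i i, apply_canAlpha_apply h]
    _ = f₂ (canAlpha k n a (Pi.single s(i, i) 1)) i := by
        rw [apply_canAlpha_apply h, Sym2.eq_swap (a := a)]
    _ = 0 := by rw [canAlpha_single_of_ne hai hai, map_zero, Pi.zero_apply]

theorem endo₂_single_apply_self (h : ∀ i, f₂ ∘ₗ canAlpha k n i = canAlpha k n i ∘ₗ f₁)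
    (i j : Fin n) : f₂ (Pi.single i 1) i = f₂ (Pi.single j 1) j :=
  calc f₂ (Pi.single i 1) i
      = f₁ (Pi.single s(i, j) 1) s(i, j) := by
        rw [← canAlpha_single_right i j, apply_canAlpha_apply h]
    _ = f₂ (Pi.single j 1) j := by
        rw [← canAlpha_single_right j i, apply_canAlpha_apply h, Sym2.eq_swap]

theorem exists_endo₂_eq_smul_id (h : ∀ i, f₂ ∘ₗ canAlpha k n i = canAlpha k n i ∘ₗ f₁) :
    ∃ μ : k, f₂ = μ • LinearMap.id := by
  obtain ⟨μ, hμ⟩ : ∃ μ : k, ∀ i, f₂ (Pi.single i 1) i = μ := by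
    rcases isEmpty_or_nonempty (Fin n) with _ | ⟨⟨i₀⟩⟩
    · exact ⟨0, isEmptyElim⟩
    · exact ⟨_, fun i => endo₂_single_apply_self h i i₀⟩
  refine ⟨μ, ?_⟩
  ext i a
  rcases eq_or_ne a i with rfl | hai
  · simp [hμ]
  · simp [endo₂_single_apply_of_ne h hai, hai]

theorem endo₁_eq_smul_id (h : ∀ i, f₂ ∘ₗ canAlpha k n i = canAlpha k n i ∘ₗ f₁) {μ : k}
    (hμ : f₂ = μ • LinearMap.id) : f₁ = μ • LinearMap.id := by
  ext x q
  induction q using Sym2.ind with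
  | _ a r => simp [← apply_canAlpha_apply h, hμ, canAlpha_apply]

theorem hasOnlyScalarEndomorphisms : Kronecker.HasOnlyScalarEndomorphisms (canAlpha k n) :=
  fun _ _ h =>
    let ⟨μ, hμ⟩ := exists_endo₂_eq_smul_id h
    ⟨μ, endo₁_eq_smul_id h hμ, hμ⟩

end CanonicalBristled

theorem endomorphism_ring_of_canonical_bristled_module_is_k_general
    {k : Type*} [Field k] {n : ℕ} :
    (∀ (f₁ : (Sym2 (Fin n) → k) →ₗ[k] (Sym2 (Fin n) → k))
        (f₂ : (Fin n → k) →ₗ[k] (Fin n → k)),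
      (∀ i, f₂ ∘ₗ canAlpha k n i = canAlpha k n i ∘ₗ f₁) →
      ∃ μ : k, f₁ = μ • LinearMap.id ∧ f₂ = μ • LinearMap.id) ∧
    (∀ (U₁ W₁ : Submodule k (Sym2 (Fin n) → k)) (U₂ W₂ : Submodule k (Fin n → k)),
      IsCompl U₁ W₁ → IsCompl U₂ W₂ →
      (∀ i, U₁.map (canAlpha k n i) ≤ U₂) →
      (∀ i, W₁.map (canAlpha k n i) ≤ W₂) →
      (U₁ = ⊥ ∧ U₂ = ⊥) ∨ (W₁ = ⊥ ∧ W₂ = ⊥)) :=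
  ⟨CanonicalBristled.hasOnlyScalarEndomorphisms,
    fun _ _ _ _ => CanonicalBristled.hasOnlyScalarEndomorphisms.eq_bot_or_eq_bot⟩

/-- The endomorphism ring of the canonical bristled module `C` is `k`:
every endomorphism `(f₁, f₂)` of `C` is a scalar multiple of the identity.
In particular, `C` is an indecomposable `n`-Kronecker module. -/
theorem endomorphism_ring_of_canonical_bristled_module_is_k
    {k : Type*} [Field k] {n : ℕ} (hn : 1 ≤ n) :
    (∀ (f₁ : (Sym2 (Fin n) → k) →ₗ[k] (Sym2 (Fin n) → k))
        (f₂ : (Fin n → k) →ₗ[k] (Fin n → k)),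
      (∀ i, f₂ ∘ₗ canAlpha k n i = canAlpha k n i ∘ₗ f₁) →
      ∃ μ : k, f₁ = μ • LinearMap.id ∧ f₂ = μ • LinearMap.id) ∧
    (∀ (U₁ W₁ : Submodule k (Sym2 (Fin n) → k)) (U₂ W₂ : Submodule k (Fin n → k)),
      IsCompl U₁ W₁ → IsCompl U₂ W₂ →
      (∀ i, U₁.map (canAlpha k n i) ≤ U₂) →
      (∀ i, W₁.map (canAlpha k n i) ≤ W₂) →
      (U₁ = ⊥ ∧ U₂ = ⊥) ∨ (W₁ = ⊥ ∧ W₂ = ⊥)) :=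
  endomorphism_ring_of_canonical_bristled_module_is_k_general
end

section
/- Theorem 1: Let k be an algebraically closed field and let q₁, …, q_m be homogeneous quadratic polynomials in the variables X₁, …, X_n over k. Then there exist natural numbers a, b and a reduced matrix pencil P = (a, b; α₁, …, α_n) together with a bijection from the set ε(P) of equivalence classes of eigenvectors of P onto the projective zero set {(λ₁ : … : λ_n) ∈ ℙ(k^n) : q_j(λ₁, …, λ_n) = 0 for all j = 1, …, m}, which sends the class of an eigenvector v to the eigenvalue of v, i.e., to the point (λ₁ : … : λ_n) determined by α_i(v) = λ_i w for all i, where w is a nonzero element of the line ⟨α₁(v), …, α_n(v)⟩. -/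
/-!
A point `μ` of `ℙ(k^n)` is encoded by the rank-one matrix `μ μᵀ`, on which every quadratic form
`q_j` becomes a linear functional `ℓ_j`. The eigenvectors of the pencil `α_i(Z) = (row i of Z)` are
exactly the rank-one matrices `Z = μ wᵀ`, with eigenvalue `μ`. Linear conditions `ψ(Z) = 0` are
imposed on the eigenvectors by appending `ψ` to `α_{i₀}` and again to `α_{i₁}` for two indices
`i₀ ≠ i₁`: at an eigenvector `ψ(Z) = μ_{i₀} u₀ = μ_{i₁} u₁` and `μ_{i₀} u₁ = 0`, so
`μ_{i₀} ψ(Z) = 0`, and `ψ(Z) = 0` whether `μ_{i₀}` vanishes or not. Imposing `Z = Zᵀ` turns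
`Z = μ wᵀ` into `Z = c μ μᵀ`, and then `ℓ_j(Z) = 0` says `q_j(μ) = 0`.
For `n ≤ 1` the space `ℙ(k^n)` has at most one point, and a pencil with no eigenvector or with a
single eigenvector class suffices.
-/

open Module Submodule Matrix MvPolynomial Projectivization
open scoped LinearAlgebra.Projectivization

theorem Finsupp.exists_eq_single_add_single {σ : Type*} {d : σ →₀ ℕ} (hd : d.degree = 2) :
    ∃ i j, d = single i 1 + single j 1 := by
  classical
  have hcard : Multiset.card (toMultiset d) = 2 := by
    rw [card_toMultiset, ← hd, degree_apply]; rfl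
  obtain ⟨i, j, hij⟩ := Multiset.card_eq_two.1 hcard
  refine ⟨i, j, ?_⟩
  rw [← toMultiset_toFinsupp d, hij, Multiset.insert_eq_cons, ← Multiset.singleton_add,
    Multiset.toFinsupp_add, Multiset.toFinsupp_singleton, Multiset.toFinsupp_singleton]

theorem MvPolynomial.IsHomogeneous.exists_linearMap_eval_vecMulVec {σ R : Type*} [CommSemiring R]
    {q : MvPolynomial σ R} (hq : q.IsHomogeneous 2) :
    ∃ ℓ : Matrix σ σ R →ₗ[R] R, ∀ x, ℓ (vecMulVec x x) = eval x q := by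
  rw [q.as_sum]
  refine Finset.sum_induction _
    (fun p => ∃ ℓ : Matrix σ σ R →ₗ[R] R, ∀ x, ℓ (vecMulVec x x) = eval x p)
    (fun _ _ ⟨ℓ, hℓ⟩ ⟨ℓ', hℓ'⟩ => ⟨ℓ + ℓ', fun x => by simp [hℓ, hℓ']⟩)
    ⟨0, fun x => by simp⟩ fun d hd => ?_
  obtain ⟨i, j, rfl⟩ := Finsupp.exists_eq_single_add_single <| by
    rw [Finsupp.degree_eq_weight_one]; exact hq (mem_support_iff.1 hd)
  refine ⟨q.coeff (Finsupp.single i 1 + Finsupp.single j 1) • entryLinearMap R R i j, fun x => ?_⟩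
  rw [eval_monomial, Finsupp.prod_add_index' (fun _ => pow_zero _) (fun _ _ _ => pow_add _ _ _)]
  simp [vecMulVec_apply]

theorem Matrix.exists_eq_smul_of_vecMulVec_eq {k σ : Type*} [Field k] {μ w : σ → k} (hμ : μ ≠ 0)
    (h : vecMulVec w μ = vecMulVec μ w) : ∃ c : k, w = c • μ := by
  obtain ⟨i₀, hi₀ : μ i₀ ≠ 0⟩ := Function.ne_iff.1 hμ
  refine ⟨w i₀ / μ i₀, funext fun j => ?_⟩
  have := congrFun (congrFun h j) i₀
  simp only [vecMulVec_apply] at this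
  simp only [Pi.smul_apply, smul_eq_mul]
  field_simp
  linear_combination this

theorem Projectivization.subsingleton_of_finrank_le_one {K V : Type*} [Field K] [AddCommGroup V]
    [Module K V] [FiniteDimensional K V] (h : finrank K V ≤ 1) : Subsingleton (ℙ K V) := by
  obtain ⟨u, hu⟩ := finrank_le_one_iff.1 h
  refine ⟨fun x y => ?_⟩
  induction x with | h x hx => induction y with | h y hy =>
  obtain ⟨a, rfl⟩ := hu x
  obtain ⟨b, rfl⟩ := hu y
  have hb : b ≠ 0 := by rintro rfl; simp at hy
  exact (mk_eq_mk_iff' K _ _ hx hy).2 ⟨a / b, by rw [smul_smul, div_mul_cancel₀ a hb]⟩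

namespace MatrixPencil

variable {k ι V W : Type*} [Field k] [AddCommGroup V] [Module k V] [AddCommGroup W] [Module k W]

-- No condition `w ≠ 0`: for a reduced pencil and `v ≠ 0` it holds automatically.
def HasEigenvalue (α : ι → V →ₗ[k] W) (v : V) (μ : ι → k) : Prop :=
  ∃ w, ∀ i, α i v = μ i • w

def eigenvectorClasses (α : ι → V →ₗ[k] W) : Set (ℙ k V) :=
  {x | ∃ (v : V) (hv : v ≠ 0), Projectivization.mk k v hv = x ∧
    finrank k (span k (Set.range fun i => α i v)) = 1}

variable {α : ι → V →ₗ[k] W} {v : V} {μ μ' : ι → k}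

theorem HasEigenvalue.smul_vector (h : HasEigenvalue α v μ) (c : k) :
    HasEigenvalue α (c • v) μ := by
  obtain ⟨w, hw⟩ := h
  exact ⟨c • w, fun i => by rw [map_smul, hw, smul_comm]⟩

theorem HasEigenvalue.smul_eigenvalue (h : HasEigenvalue α v μ) {t : k} (ht : t ≠ 0) :
    HasEigenvalue α v (t • μ) := by
  obtain ⟨w, hw⟩ := h
  refine ⟨t⁻¹ • w, fun i => ?_⟩
  rw [hw, Pi.smul_apply, smul_smul, smul_eq_mul, mul_comm t, mul_assoc, mul_inv_cancel₀ ht,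
    mul_one]

theorem HasEigenvalue.of_mk_eq_mk (h : HasEigenvalue α v μ) {v' : V} (hv : v ≠ 0) (hv' : v' ≠ 0)
    (hμ : μ ≠ 0) (hμ' : μ' ≠ 0) (hvv' : Projectivization.mk k v hv = Projectivization.mk k v' hv')
    (hμμ' : Projectivization.mk k μ hμ = Projectivization.mk k μ' hμ') : HasEigenvalue α v' μ' := by
  obtain ⟨a, rfl⟩ := (mk_eq_mk_iff' k _ _ hv' hv).1 hvv'.symm
  obtain ⟨t, rfl⟩ := (mk_eq_mk_iff k _ _ hμ' hμ).1 hμμ'.symm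
  exact (h.smul_vector a).smul_eigenvalue t.ne_zero

theorem exists_apply_ne_zero (hα : ⨅ i, LinearMap.ker (α i) = ⊥) (hv : v ≠ 0) : ∃ i, α i v ≠ 0 := by
  by_contra! h
  exact hv <| (Submodule.eq_bot_iff _).1 hα v (Submodule.mem_iInf _ |>.2 h)

theorem HasEigenvalue.ne_zero (hα : ⨅ i, LinearMap.ker (α i) = ⊥) (hv : v ≠ 0)
    (h : HasEigenvalue α v μ) : μ ≠ 0 := by
  obtain ⟨i, hi⟩ := exists_apply_ne_zero hα hv
  obtain ⟨w, hw⟩ := h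
  rintro rfl
  simp [hw] at hi

theorem HasEigenvalue.mk_eq_mk (hα : ⨅ i, LinearMap.ker (α i) = ⊥) (hv : v ≠ 0)
    (h : HasEigenvalue α v μ) (h' : HasEigenvalue α v μ') (hμ : μ ≠ 0) (hμ' : μ' ≠ 0) :
    Projectivization.mk k μ hμ = Projectivization.mk k μ' hμ' := by
  obtain ⟨i₀, hi₀⟩ := exists_apply_ne_zero hα hv
  obtain ⟨w, hw⟩ := h
  obtain ⟨w', hw'⟩ := h'
  have hw0 : w ≠ 0 := by rintro rfl; simp [hw] at hi₀
  have hμ'i₀ : μ' i₀ ≠ 0 := by intro h0; simp [hw', h0] at hi₀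
  have hw'w : w' = ((μ' i₀)⁻¹ * μ i₀) • w := by
    rw [mul_smul, ← hw, hw', smul_smul, inv_mul_cancel₀ hμ'i₀, one_smul]
  refine (mk_eq_mk_iff' k _ _ hμ hμ').2 ⟨(μ' i₀)⁻¹ * μ i₀, funext fun i => ?_⟩
  apply smul_left_injective k hw0
  simp only [Pi.smul_apply, smul_eq_mul]
  rw [mul_comm, mul_smul, ← hw'w, ← hw', hw]

theorem finrank_span_range_eq_one_iff (hα : ⨅ i, LinearMap.ker (α i) = ⊥) (hv : v ≠ 0) :
    finrank k (span k (Set.range fun i => α i v)) = 1 ↔ ∃ μ, HasEigenvalue α v μ := by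
  constructor
  · intro h
    obtain ⟨u, -, hu⟩ := finrank_eq_one_iff'.1 h
    choose μ hμ using fun i => hu ⟨α i v, subset_span ⟨i, rfl⟩⟩
    exact ⟨μ, u, fun i => (congrArg Subtype.val (hμ i)).symm⟩
  · rintro ⟨μ, w, hw⟩
    obtain ⟨i₀, hi₀⟩ := exists_apply_ne_zero hα hv
    have hμi₀ : μ i₀ ≠ 0 := by intro h0; simp [hw, h0] at hi₀
    have hspan : span k (Set.range fun i => α i v) = k ∙ α i₀ v := by
      refine le_antisymm (span_le.2 ?_) (span_mono (Set.singleton_subset_iff.2 ⟨i₀, rfl⟩))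
      rintro _ ⟨i, rfl⟩
      refine mem_span_singleton.2 ⟨μ i * (μ i₀)⁻¹, ?_⟩
      simp only [hw, smul_smul, mul_assoc, inv_mul_cancel₀ hμi₀, mul_one]
    rw [hspan, finrank_span_singleton hi₀]

/-- The conditions, checked on representatives, under which the eigenvalue map is a bijection
from `eigenvectorClasses α` onto `Y` (`Realizes.exists_equiv`). -/
structure Realizes (α : ι → V →ₗ[k] W) (Y : Set (ℙ k (ι → k))) : Prop where
  reduced : ⨅ i, LinearMap.ker (α i) = ⊥
  mk_mem : ∀ v μ (hμ : μ ≠ 0), v ≠ 0 → HasEigenvalue α v μ → Projectivization.mk k μ hμ ∈ Y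
  exists_hasEigenvalue : ∀ y ∈ Y, ∃ v ≠ 0, HasEigenvalue α v y.rep
  mk_eq_mk : ∀ v v' μ (hv : v ≠ 0) (hv' : v' ≠ 0), μ ≠ 0 → HasEigenvalue α v μ →
    HasEigenvalue α v' μ → Projectivization.mk k v hv = Projectivization.mk k v' hv'

variable {Y : Set (ℙ k (ι → k))}

theorem Realizes.exists_equiv (h : Realizes α Y) :
    ∃ F : eigenvectorClasses α ≃ Y, ∀ (x : eigenvectorClasses α) (v : V) (hv : v ≠ 0),
      Projectivization.mk k v hv = x → ∀ (μ : ι → k) (hμ : μ ≠ 0),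
        Projectivization.mk k μ hμ = F x → ∃ w ≠ 0, ∀ i, α i v = μ i • w := by
  have hF : ∀ x : eigenvectorClasses α, ∃ y : Y, HasEigenvalue α x.1.rep y.1.rep := by
    rintro ⟨x, v, hv, rfl, hrank⟩
    obtain ⟨μ, hvμ⟩ := (finrank_span_range_eq_one_iff h.reduced hv).1 hrank
    have hμ := hvμ.ne_zero h.reduced hv
    exact ⟨⟨_, h.mk_mem v μ hμ hv hvμ⟩,
      hvμ.of_mk_eq_mk hv (rep_nonzero _) hμ (rep_nonzero _) (mk_rep _).symm (mk_rep _).symm⟩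
  choose F hF using hF
  have hinj : F.Injective := fun x x' hxx' => Subtype.ext <| by
    rw [← mk_rep x.1, ← mk_rep x'.1]
    exact h.mk_eq_mk _ _ _ _ _ (rep_nonzero _) (hF x) (hxx' ▸ hF x')
  have hsurj : F.Surjective := by
    intro y
    obtain ⟨v, hv, hvy⟩ := h.exists_hasEigenvalue y y.2
    have hx : Projectivization.mk k v hv ∈ eigenvectorClasses α :=
      ⟨v, hv, rfl, (finrank_span_range_eq_one_iff h.reduced hv).2 ⟨_, hvy⟩⟩
    refine ⟨⟨_, hx⟩, Subtype.ext ?_⟩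
    rw [← mk_rep (F _).1, ← mk_rep y.1]
    refine HasEigenvalue.mk_eq_mk h.reduced hv ?_ hvy _ _
    exact (hF _).of_mk_eq_mk (rep_nonzero _) hv (rep_nonzero _) (rep_nonzero _) (mk_rep _) rfl
  refine ⟨Equiv.ofBijective F ⟨hinj, hsurj⟩, fun x v hv hvx μ hμ hμx => ?_⟩
  obtain ⟨w, hw⟩ := (hF x).of_mk_eq_mk (rep_nonzero _) hv (rep_nonzero _) hμ
    (by rw [mk_rep, hvx]) (by rw [mk_rep, hμx]; rfl)
  obtain ⟨i, hi⟩ := exists_apply_ne_zero h.reduced hv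
  exact ⟨w, by rintro rfl; simp [hw] at hi, hw⟩

theorem hasEigenvalue_conj_iff {V' W' : Type*} [AddCommGroup V'] [Module k V'] [AddCommGroup W']
    [Module k W'] (e : V ≃ₗ[k] V') (f : W ≃ₗ[k] W') {v' : V'} :
    HasEigenvalue (fun i => f.toLinearMap ∘ₗ α i ∘ₗ e.symm.toLinearMap) v' μ ↔
      HasEigenvalue α (e.symm v') μ := by
  constructor
  · rintro ⟨w, hw⟩
    exact ⟨f.symm w, fun i => by rw [← map_smul, ← hw i]; simp⟩
  · rintro ⟨w, hw⟩
    exact ⟨f w, fun i => by simp [hw i]⟩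

theorem Realizes.congr {V' W' : Type*} [AddCommGroup V'] [Module k V'] [AddCommGroup W']
    [Module k W'] (h : Realizes α Y) (e : V ≃ₗ[k] V') (f : W ≃ₗ[k] W') :
    Realizes (fun i => f.toLinearMap ∘ₗ α i ∘ₗ e.symm.toLinearMap) Y where
  reduced := by
    rw [Submodule.eq_bot_iff]
    intro v hv
    simp only [Submodule.mem_iInf, LinearMap.mem_ker, LinearMap.comp_apply,
      LinearEquiv.coe_coe, LinearEquiv.map_eq_zero_iff] at hv
    simpa using (Submodule.eq_bot_iff _).1 h.reduced _ (Submodule.mem_iInf _ |>.2 hv)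
  mk_mem v μ hμ hv hvμ :=
    h.mk_mem _ μ hμ (by simpa using hv) ((hasEigenvalue_conj_iff e f).1 hvμ)
  exists_hasEigenvalue y hy := by
    obtain ⟨v, hv, hvy⟩ := h.exists_hasEigenvalue y hy
    exact ⟨e v, by simpa using hv, (hasEigenvalue_conj_iff e f).2 (by simpa using hvy)⟩
  mk_eq_mk v v' μ hv hv' hμ hvμ hv'μ := by
    have := congrArg (Projectivization.map e.toLinearMap e.injective)
      (h.mk_eq_mk _ _ μ (by simpa using hv) (by simpa using hv') hμ
        ((hasEigenvalue_conj_iff e f).1 hvμ) ((hasEigenvalue_conj_iff e f).1 hv'μ))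
    simpa [map_mk] using this

theorem Realizes.exists_fin [FiniteDimensional k V] [FiniteDimensional k W]
    (h : Realizes α Y) : ∃ (a b : ℕ) (β : ι → (Fin a → k) →ₗ[k] (Fin b → k)), Realizes β Y :=
  ⟨_, _, _, h.congr (finBasis k V).equivFun (finBasis k W).equivFun⟩

theorem realizes_empty : Realizes (fun _ : ι => (0 : (Fin 0 → k) →ₗ[k] (Fin 0 → k))) ∅ where
  reduced := Subsingleton.elim _ _
  mk_mem _ _ _ hv := absurd (Subsingleton.elim _ _) hv
  exists_hasEigenvalue _ hy := hy.elim
  mk_eq_mk _ _ _ hv := absurd (Subsingleton.elim _ _) hv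

theorem realizes_singleton {μ₀ : ι → k} (hμ₀ : μ₀ ≠ 0) :
    Realizes (fun i => μ₀ i • LinearMap.id (R := k) (M := Fin 1 → k))
      {Projectivization.mk k μ₀ hμ₀} := by
  have hα : ∀ v, HasEigenvalue (fun i => μ₀ i • LinearMap.id (R := k) (M := Fin 1 → k)) v μ₀ :=
    fun v => ⟨v, fun _ => rfl⟩
  have hred : ⨅ i, LinearMap.ker (μ₀ i • LinearMap.id (R := k) (M := Fin 1 → k)) = ⊥ := by
    obtain ⟨i, hi⟩ := Function.ne_iff.1 hμ₀
    exact eq_bot_iff.2 <| (iInf_le _ i).trans (by simp [LinearMap.ker_smul _ _ hi])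
  have : Subsingleton (ℙ k (Fin 1 → k)) := subsingleton_of_finrank_le_one (by simp)
  refine ⟨hred, fun v μ hμ hv hvμ => (hvμ.mk_eq_mk hred hv (hα v) hμ hμ₀), ?_,
    fun _ _ _ _ _ _ _ _ => Subsingleton.elim _ _⟩
  rintro y rfl
  exact ⟨1, one_ne_zero,
    (hα 1).of_mk_eq_mk one_ne_zero one_ne_zero hμ₀ (rep_nonzero _) rfl (mk_rep _).symm⟩

theorem exists_realizes_of_subsingleton [Subsingleton (ℙ k (ι → k))] (Y : Set (ℙ k (ι → k))) :
    ∃ (a b : ℕ) (α : ι → (Fin a → k) →ₗ[k] (Fin b → k)), Realizes α Y := by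
  rcases Y.eq_empty_or_nonempty with rfl | ⟨y, hy⟩
  · exact ⟨0, 0, _, realizes_empty⟩
  · have hY : Y = {Projectivization.mk k y.rep (rep_nonzero y)} := by
      rw [mk_rep]; exact Set.eq_singleton_iff_unique_mem.2 ⟨hy, fun _ _ => Subsingleton.elim _ _⟩
    exact ⟨1, 1, _, hY ▸ realizes_singleton (rep_nonzero y)⟩

section Constrain

variable [DecidableEq ι] {U : Type*} [AddCommGroup U] [Module k U]

def constrain (β : ι → V →ₗ[k] W) (ψ : V →ₗ[k] U) (i₀ i₁ : ι) (i : ι) : V →ₗ[k] W × U × U :=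
  (β i).prod ((if i = i₀ then ψ else 0).prod (if i = i₁ then ψ else 0))

variable {β : ι → V →ₗ[k] W} {ψ : V →ₗ[k] U} {i₀ i₁ : ι}

theorem iInf_ker_constrain (hβ : ⨅ i, LinearMap.ker (β i) = ⊥) :
    ⨅ i, LinearMap.ker (constrain β ψ i₀ i₁ i) = ⊥ :=
  eq_bot_iff.2 <| hβ ▸ iInf_mono fun i => by simp [constrain, LinearMap.ker_prod]

theorem hasEigenvalue_constrain_iff (h : i₀ ≠ i₁) :
    HasEigenvalue (constrain β ψ i₀ i₁) v μ ↔ HasEigenvalue β v μ ∧ ψ v = 0 := by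
  constructor
  · rintro ⟨⟨w, u₀, u₁⟩, hw⟩
    refine ⟨⟨w, fun i => congrArg Prod.fst (hw i)⟩, ?_⟩
    have h₀ := congrArg (·.2.1) (hw i₀)
    have h₀₁ := congrArg (·.2.2) (hw i₀)
    have h₁ := congrArg (·.2.2) (hw i₁)
    simp only [constrain, LinearMap.prod_apply, if_pos, if_neg h, if_neg h.symm,
      LinearMap.zero_apply, Function.prod, Prod.smul_mk] at h₀ h₀₁ h₁
    have hμψ : μ i₀ • ψ v = 0 := by rw [h₁, smul_comm, ← h₀₁, smul_zero]
    rcases smul_eq_zero.1 hμψ with hμ | hψ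
    · rw [h₀, hμ, zero_smul]
    · exact hψ
  · rintro ⟨⟨w, hw⟩, hψ⟩
    refine ⟨(w, 0, 0), fun i => ?_⟩
    ext <;> simp only [constrain, LinearMap.prod_apply, Function.prod, hw, Prod.smul_mk,
      smul_zero] <;> split_ifs <;> simp [hψ]

end Constrain

section Quadric

variable {σ ι : Type*}

theorem hasEigenvalue_rows_iff {Z : Matrix σ σ k} {μ : σ → k} :
    HasEigenvalue (fun i => LinearMap.proj i ∘ₗ (ofLinearEquiv k).symm.toLinearMap) Z μ ↔
      ∃ w, Z = vecMulVec μ w := by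
  simp only [HasEigenvalue, LinearMap.comp_apply, LinearEquiv.coe_coe, coe_ofLinearEquiv_symm,
    LinearMap.coe_proj, Function.eval, funext_iff, ← Matrix.ext_iff, vecMulVec_apply,
    Pi.smul_apply, smul_eq_mul]
  rfl

variable [DecidableEq σ]

def quadricPencil (ℓ : ι → Matrix σ σ k →ₗ[k] k) (i₀ i₁ : σ) :
    σ → Matrix σ σ k →ₗ[k] (σ → k) × (Matrix σ σ k × (ι → k)) × (Matrix σ σ k × (ι → k)) :=
  constrain (fun i => LinearMap.proj i ∘ₗ (ofLinearEquiv k).symm.toLinearMap)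
    ((LinearMap.id - (transposeLinearEquiv σ σ k k).toLinearMap).prod (LinearMap.pi ℓ)) i₀ i₁

variable {ℓ : ι → Matrix σ σ k →ₗ[k] k} {i₀ i₁ : σ} {Z : Matrix σ σ k} {μ : σ → k}

theorem hasEigenvalue_quadricPencil_iff (h : i₀ ≠ i₁) (hZ : Z ≠ 0) (hμ : μ ≠ 0) :
    HasEigenvalue (quadricPencil ℓ i₀ i₁) Z μ ↔
      ∃ c : k, c ≠ 0 ∧ Z = c • vecMulVec μ μ ∧ ∀ j, ℓ j (vecMulVec μ μ) = 0 := by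
  rw [quadricPencil, hasEigenvalue_constrain_iff h, hasEigenvalue_rows_iff]
  constructor
  · rintro ⟨⟨w, rfl⟩, hψ⟩
    simp only [LinearMap.prod_apply, Function.prod, LinearMap.sub_apply, LinearMap.id_coe, id_eq,
      LinearEquiv.coe_coe, transposeLinearEquiv_apply, AddEquiv.toEquiv_eq_coe, Equiv.toFun_as_coe,
      EquivLike.coe_coe, transposeAddEquiv_apply, transpose_vecMulVec, Prod.mk_eq_zero, sub_eq_zero,
      _root_.funext_iff, LinearMap.pi_apply, Pi.zero_apply] at hψ
    obtain ⟨c, rfl⟩ := exists_eq_smul_of_vecMulVec_eq hμ hψ.1.symm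
    rw [vecMulVec_smul] at hZ hψ ⊢
    have hc : c ≠ 0 := by rintro rfl; simp at hZ
    exact ⟨c, hc, rfl, fun j => by simpa [hc] using hψ.2 j⟩
  · rintro ⟨c, -, rfl, hℓ⟩
    refine ⟨⟨c • μ, (vecMulVec_smul c μ μ).symm⟩, ?_⟩
    simp [Function.prod, hℓ, _root_.funext_iff]

theorem realizes_quadricPencil (h : i₀ ≠ i₁) :
    Realizes (quadricPencil ℓ i₀ i₁) {y | ∀ (μ : σ → k) (hμ : μ ≠ 0),
      Projectivization.mk k μ hμ = y → ∀ j, ℓ j (vecMulVec μ μ) = 0} where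
  reduced := iInf_ker_constrain <| eq_bot_iff.2 fun Z hZ => by
    simp only [Submodule.mem_iInf, LinearMap.mem_ker, LinearMap.comp_apply, LinearEquiv.coe_coe,
      coe_ofLinearEquiv_symm, LinearMap.coe_proj, Function.eval] at hZ
    exact (Submodule.mem_bot k).2 (funext hZ)
  mk_mem Z μ hμ hZ hZμ μ' hμ' hμμ' := by
    obtain ⟨-, -, -, hℓ⟩ := (hasEigenvalue_quadricPencil_iff h hZ hμ').1 <|
      hZμ.of_mk_eq_mk hZ hZ hμ hμ' rfl hμμ'.symm
    exact hℓ
  exists_hasEigenvalue y hy := by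
    have hM := vecMulVec_ne_zero (rep_nonzero y) (rep_nonzero y)
    exact ⟨_, hM, (hasEigenvalue_quadricPencil_iff h hM (rep_nonzero y)).2
      ⟨1, one_ne_zero, (one_smul _ _).symm, hy _ _ (mk_rep y)⟩⟩
  mk_eq_mk Z Z' μ hZ hZ' hμ hZμ hZ'μ := by
    obtain ⟨c, -, rfl, -⟩ := (hasEigenvalue_quadricPencil_iff h hZ hμ).1 hZμ
    obtain ⟨c', hc', rfl, -⟩ := (hasEigenvalue_quadricPencil_iff h hZ' hμ).1 hZ'μ
    exact (mk_eq_mk_iff' k _ _ _ _).2 ⟨c / c', by rw [smul_smul, div_mul_cancel₀ c hc']⟩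

end Quadric

def projectiveZeroSet {σ ι : Type*} (q : ι → MvPolynomial σ k) : Set (ℙ k (σ → k)) :=
  {y | ∀ (x : σ → k) (hx : x ≠ 0), Projectivization.mk k x hx = y → ∀ j, eval x (q j) = 0}

theorem exists_realizes_projectiveZeroSet {σ ι : Type*} [Finite σ] [Finite ι]
    (q : ι → MvPolynomial σ k) (hq : ∀ j, (q j).IsHomogeneous 2) :
    ∃ (a b : ℕ) (α : σ → (Fin a → k) →ₗ[k] (Fin b → k)), Realizes α (projectiveZeroSet q) := by
  classical
  have := Fintype.ofFinite σ
  rcases subsingleton_or_nontrivial σ with hσ | hσ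
  · have : Subsingleton (ℙ k (σ → k)) := subsingleton_of_finrank_le_one <| by
      rw [Module.finrank_fintype_fun_eq_card]; exact Fintype.card_le_one_iff_subsingleton.2 hσ
    exact exists_realizes_of_subsingleton _
  · obtain ⟨i₀, i₁, h⟩ := exists_pair_ne σ
    choose ℓ hℓ using fun j => (hq j).exists_linearMap_eval_vecMulVec
    have := realizes_quadricPencil (ℓ := ℓ) h
    simp only [hℓ] at this
    exact this.exists_fin

end MatrixPencil

theorem every_projective_variety_is_an_eigenvector_variety_general
    {k : Type*} [Field k] {n m : ℕ}
    (q : Fin m → MvPolynomial (Fin n) k) (hq : ∀ j, (q j).IsHomogeneous 2) :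
    ∃ (a b : ℕ) (α : Fin n → ((Fin a → k) →ₗ[k] (Fin b → k))),
      -- `P` is reduced
      (⨅ i, LinearMap.ker (α i)) = ⊥ ∧
      -- a bijection from `ε(P)` onto the projective zero set of `q₁, …, q_m`
      ∃ F : {x : Projectivization k (Fin a → k) |
                ∃ (v : Fin a → k) (hv : v ≠ 0), Projectivization.mk k v hv = x ∧
                  finrank k (span k (Set.range fun i => α i v)) = 1} ≃
            {y : Projectivization k (Fin n → k) |
                ∀ (lam : Fin n → k) (hlam : lam ≠ 0),
                  Projectivization.mk k lam hlam = y →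
                  ∀ j, MvPolynomial.eval lam (q j) = 0},
        -- `F` sends the class of an eigenvector `v` to its eigenvalue:
        -- for every representative `v` of `x` and every representative `lam`
        -- of `F x` there is `w ≠ 0` with `α_i(v) = lam_i • w` for all `i`
        ∀ (x : {x : Projectivization k (Fin a → k) |
                ∃ (v : Fin a → k) (hv : v ≠ 0), Projectivization.mk k v hv = x ∧
                  finrank k (span k (Set.range fun i => α i v)) = 1})
          (v : Fin a → k) (hv : v ≠ 0),
          Projectivization.mk k v hv = (x : Projectivization k (Fin a → k)) →
          ∀ (lam : Fin n → k) (hlam : lam ≠ 0),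
            Projectivization.mk k lam hlam = (F x : Projectivization k (Fin n → k)) →
            ∃ w : Fin b → k, w ≠ 0 ∧ ∀ i, α i v = lam i • w := by
  obtain ⟨a, b, α, hα⟩ := MatrixPencil.exists_realizes_projectiveZeroSet q hq
  exact ⟨a, b, α, hα.reduced, hα.exists_equiv⟩

/-- Theorem 1: over an algebraically closed field `k`, for any
homogeneous quadratic polynomials `q₁, …, q_m` in `X₁, …, X_n` there is a
reduced matrix pencil `P = (a, b; α₁, …, α_n)` and a bijection from `ε(P)` onto
the projective zero set `{(λ₁ : … : λ_n) ∈ ℙ(k^n) : q_j(λ) = 0 for all j}`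
sending the class of an eigenvector to its eigenvalue. -/
theorem every_projective_variety_is_an_eigenvector_variety
    {k : Type*} [Field k] [IsAlgClosed k] {n m : ℕ}
    (q : Fin m → MvPolynomial (Fin n) k) (hq : ∀ j, (q j).IsHomogeneous 2) :
    ∃ (a b : ℕ) (α : Fin n → ((Fin a → k) →ₗ[k] (Fin b → k))),
      -- `P` is reduced
      (⨅ i, LinearMap.ker (α i)) = ⊥ ∧
      -- a bijection from `ε(P)` onto the projective zero set of `q₁, …, q_m`
      ∃ F : {x : Projectivization k (Fin a → k) |
                ∃ (v : Fin a → k) (hv : v ≠ 0), Projectivization.mk k v hv = x ∧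
                  finrank k (span k (Set.range fun i => α i v)) = 1} ≃
            {y : Projectivization k (Fin n → k) |
                ∀ (lam : Fin n → k) (hlam : lam ≠ 0),
                  Projectivization.mk k lam hlam = y →
                  ∀ j, MvPolynomial.eval lam (q j) = 0},
        -- `F` sends the class of an eigenvector `v` to its eigenvalue:
        -- for every representative `v` of `x` and every representative `lam`
        -- of `F x` there is `w ≠ 0` with `α_i(v) = lam_i • w` for all `i`
        ∀ (x : {x : Projectivization k (Fin a → k) |
                ∃ (v : Fin a → k) (hv : v ≠ 0), Projectivization.mk k v hv = x ∧
                  finrank k (span k (Set.range fun i => α i v)) = 1})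
          (v : Fin a → k) (hv : v ≠ 0),
          Projectivization.mk k v hv = (x : Projectivization k (Fin a → k)) →
          ∀ (lam : Fin n → k) (hlam : lam ≠ 0),
            Projectivization.mk k lam hlam = (F x : Projectivization k (Fin n → k)) →
            ∃ w : Fin b → k, w ≠ 0 ∧ ∀ i, α i v = lam i • w :=
  every_projective_variety_is_an_eigenvector_variety_general q hq
end

section
/- Lemma: Let M = (M₁, M₂; α₁, …, α_n) be an n-Kronecker module with dim M₁ = a and dim M₂ = b finite. If M is the sum of its bristle submodules (i.e., M₁ is the sum of the subspaces U₁ and M₂ is the sum of the subspaces U₂, taken over all bristle submodules (U₁, U₂) of M), then M is already the sum of a bristle submodules: there exist bristle submodules (U₁^{(1)}, U₂^{(1)}), …, (U₁^{(a)}, U₂^{(a)}) of M with M₁ = Σ_{s=1}^a U₁^{(s)} and M₂ = Σ_{s=1}^a U₂^{(s)}. As a consequence, a ≥ b. -/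
/-!
An `n`-Kronecker module `M = (M₁, M₂; α₁, …, α_n)` consists of finite-dimensional
`k`-vector spaces `M₁, M₂` and linear maps `α_i : M₁ → M₂`.  A submodule of `M`
is a pair of subspaces `(U₁ ⊆ M₁, U₂ ⊆ M₂)` with `α_i(U₁) ⊆ U₂` for all `i`;
a bristle submodule is a submodule with `dim U₁ = dim U₂ = 1` and
`α_i(U₁) ≠ 0` for at least one `i`.
-/

open Module Submodule

/-- A bristle submodule of the Kronecker module given by `α`. -/
def IsBristle {k : Type*} [Field k] {n : ℕ} {V W : Type*}
    [AddCommGroup V] [Module k V] [AddCommGroup W] [Module k W]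
    (α : Fin n → V →ₗ[k] W) (U₁ : Submodule k V) (U₂ : Submodule k W) : Prop :=
  (∀ i, U₁.map (α i) ≤ U₂) ∧ finrank k U₁ = 1 ∧ finrank k U₂ = 1 ∧
    ∃ i, U₁.map (α i) ≠ ⊥

/-- `sSup` of a set of submodules is the span of the union. -/
lemma sSup_eq_span_biUnion {k : Type*} [Field k] {V : Type*}
    [AddCommGroup V] [Module k V] (s : Set (Submodule k V)) :
    sSup s = span k (⋃ U ∈ s, (U : Set V)) := by
  apply le_antisymm
  · exact sSup_le fun U hU => (span_eq U) ▸ span_mono (Set.subset_biUnion_of_mem hU)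
  · rw [span_le]
    exact Set.iUnion₂_subset fun U hU => SetLike.coe_subset_coe.mpr (le_sSup hU)

/-- Lemma: if the `n`-Kronecker module `M = (M₁, M₂; α)` with
`dim M₁ = a`, `dim M₂ = b` is the sum of its bristle submodules, then it is the
sum of `a` bristle submodules; as a consequence, `a ≥ b`. -/
theorem sum_of_bristles_is_sum_of_dim_many_bristles
    {k : Type*} [Field k] {n : ℕ} (hn : 1 ≤ n)
    {V W : Type*} [AddCommGroup V] [Module k V] [AddCommGroup W] [Module k W]
    [FiniteDimensional k V] [FiniteDimensional k W]
    (α : Fin n → V →ₗ[k] W)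
    (h1 : sSup {U₁ : Submodule k V | ∃ U₂, IsBristle α U₁ U₂} = ⊤)
    (h2 : sSup {U₂ : Submodule k W | ∃ U₁, IsBristle α U₁ U₂} = ⊤) :
    (∃ U : Fin (finrank k V) → Submodule k V × Submodule k W,
      (∀ s, IsBristle α (U s).1 (U s).2) ∧
      (⨆ s, (U s).1) = ⊤ ∧ (⨆ s, (U s).2) = ⊤) ∧
    finrank k W ≤ finrank k V := by
  classical
  set S : Set (Submodule k V) := {U₁ : Submodule k V | ∃ U₂, IsBristle α U₁ U₂} with hS
  set t : Set V := ⋃ U ∈ S, (U : Set V) with ht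
  have hspan : span k t = ⊤ := by
    rw [ht, ← sSup_eq_span_biUnion, h1]
  obtain ⟨b, hbt, hbspan, hbli⟩ := exists_linearIndependent k t
  rw [hspan] at hbspan
  let B : Basis b k V := Basis.mk hbli (by rw [Subtype.range_coe, hbspan])
  haveI : Fintype b := FiniteDimensional.fintypeBasisIndex B
  have hcard : Fintype.card b = finrank k V := (finrank_eq_card_basis B).symm
  let e : Fin (finrank k V) ≃ b := (Fintype.equivFinOfCardEq hcard).symm
  have hchoice : ∀ s : Fin (finrank k V), ∃ P : Submodule k V × Submodule k W,
      IsBristle α P.1 P.2 ∧ ((e s : V) ∈ P.1) := by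
    intro s
    have hx : ((e s : V) ∈ t) := hbt (e s).2
    rw [ht] at hx
    simp only [Set.mem_iUnion, SetLike.mem_coe] at hx
    obtain ⟨U, ⟨U₂, hU⟩, hxU⟩ := hx
    exact ⟨(U, U₂), hU, hxU⟩
  choose U hU1 hU2 using hchoice
  have hsup1 : (⨆ s, (U s).1) = ⊤ := by
    apply le_antisymm le_top
    rw [← hbspan, span_le]
    intro x hx
    have : x = ((e (e.symm ⟨x, hx⟩) : b) : V) := by rw [Equiv.apply_symm_apply]
    rw [this]
    exact SetLike.mem_coe.mpr (le_iSup (fun s => (U s).1) (e.symm ⟨x, hx⟩) (hU2 _))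
  have hrange : ∀ i, LinearMap.range (α i) ≤ ⨆ s, (U s).2 := by
    intro i
    rw [LinearMap.range_eq_map, ← hsup1, Submodule.map_iSup]
    exact iSup_le fun s => le_trans ((hU1 s).1 i) (le_iSup (fun s => (U s).2) s)
  have hsup2 : (⨆ s, (U s).2) = ⊤ := by
    apply le_antisymm le_top
    rw [← h2]
    apply sSup_le
    rintro U₂ ⟨U₁, hmap, _, hr2, i, hi⟩
    have hfin : 1 ≤ finrank k (U₁.map (α i)) := by
      rw [Nat.one_le_iff_ne_zero]
      intro h0
      apply hi
      have : Nontrivial (U₁.map (α i)) → False := by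
        intro hnt
        have := Module.finrank_pos_iff (R := k) (M := U₁.map (α i)) |>.mpr hnt
        omega
      rw [← Submodule.nontrivial_iff_ne_bot] at hi
      exact absurd hi this
    have heq : U₁.map (α i) = U₂ :=
      eq_of_le_of_finrank_le (hmap i) (by rw [hr2]; exact hfin)
    calc U₂ = U₁.map (α i) := heq.symm
      _ ≤ LinearMap.range (α i) := LinearMap.map_le_range
      _ ≤ ⨆ s, (U s).2 := hrange i
  refine ⟨⟨U, hU1, hsup1, hsup2⟩, ?_⟩
  -- choose a generator of each (U s).2
  have hgen : ∀ s : Fin (finrank k V), ∃ w : W, (U s).2 = span k {w} := by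
    intro s
    obtain ⟨-, -, hr2, -⟩ := hU1 s
    have : Nontrivial ((U s).2) := by
      apply Module.finrank_pos_iff (R := k) |>.mp
      omega
    rw [Submodule.nontrivial_iff_ne_bot] at this
    obtain ⟨w, hw, hw0⟩ := Submodule.exists_mem_ne_zero_of_ne_bot this
    have hle : span k {w} ≤ (U s).2 := by rwa [span_singleton_le_iff_mem]
    refine ⟨w, (eq_of_le_of_finrank_le hle ?_).symm⟩
    rw [hr2, finrank_span_singleton hw0]
  choose w hw using hgen
  have : (⊤ : Submodule k W) = span k (Set.range w) := by
    rw [← hsup2]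
    simp_rw [hw]
    rw [← Set.image_univ, Set.image_eq_iUnion, ← iSup_span]
    simp
  have hfr : finrank k W = finrank k (span k (Set.range w)) := by
    rw [← this, finrank_top]
  rw [hfr]
  exact le_trans (finrank_range_le_card w) (by simp)
end

section
/- For every reduced n-Kronecker module M = (M₁, M₂; α₁, …, α_n) with dim M₁ = a and dim M₂ = b finite, there exists a reduced n-Kronecker module N = (N₁, N₂; β₁, …, β_n) with dim N₁ = dim N₂ = a′ for some a′ ≤ a, together with a bijection between the set of bristle submodules of M and the set of bristle submodules of N. -/
/-!
An `n`-Kronecker module `M = (M₁, M₂; α₁, …, α_n)` consists of finite-dimensional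
`k`-vector spaces `M₁, M₂` and linear maps `α_i : M₁ → M₂`; it is reduced if
`⋂_i ker α_i = 0`.  A bristle submodule is a pair of subspaces
`(U₁ ⊆ M₁, U₂ ⊆ M₂)` with `α_i(U₁) ⊆ U₂` for all `i`, `dim U₁ = dim U₂ = 1`,
and `α_i(U₁) ≠ 0` for at least one `i`.
-/

open Module Submodule

section Aux

variable {k : Type*} [Field k] {n : ℕ} {V W : Type*}
    [AddCommGroup V] [Module k V] [AddCommGroup W] [Module k W]

/-- finrank of image of a submodule under an injective map. -/
lemma finrank_map_inj (f : V →ₗ[k] W) (hf : Function.Injective f)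
    (p : Submodule k V) : finrank k (p.map f) = finrank k p :=
  (Submodule.equivMapOfInjective f hf p).finrank_eq.symm

/-- Any submodule of finrank one is a span of a nonzero vector. -/
lemma exists_span_singleton_of_finrank_eq_one [FiniteDimensional k V]
    {U : Submodule k V} (hU : finrank k U = 1) :
    ∃ x : V, x ≠ 0 ∧ U = span k {x} := by
  have h0 : U ≠ ⊥ := by
    intro h
    rw [h, finrank_bot] at hU
    omega
  obtain ⟨x, hxU, hx0⟩ := Submodule.ne_bot_iff U |>.mp h0
  refine ⟨x, hx0, ?_⟩
  have hle : span k {x} ≤ U := (span_singleton_le_iff_mem x U).mpr hxU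
  have := finrank_span_singleton (K := k) hx0
  exact (Submodule.eq_of_le_of_finrank_le hle (by rw [this, hU])).symm

variable [FiniteDimensional k W]

/-- For a bristle, the second component is determined by the first. -/
lemma IsBristle.snd_eq {α : Fin n → V →ₗ[k] W} {U₁ : Submodule k V}
    {U₂ : Submodule k W} (h : IsBristle α U₁ U₂) :
    U₂ = ⨆ i, U₁.map (α i) := by
  obtain ⟨hle, h1, h2, i0, hi0⟩ := h
  have hsle : (⨆ i, U₁.map (α i)) ≤ U₂ := iSup_le hle
  have hne : (⨆ i, U₁.map (α i)) ≠ ⊥ := by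
    intro h
    exact hi0 (le_bot_iff.mp (h ▸ le_iSup (fun i => U₁.map (α i)) i0))
  have hnt : Nontrivial (⨆ i, U₁.map (α i) : Submodule k W) :=
    Submodule.nontrivial_iff_ne_bot.mpr hne
  have hpos : 0 < finrank k ↥(⨆ i, U₁.map (α i) : Submodule k W) :=
    finrank_pos_iff.mpr hnt
  exact (Submodule.eq_of_le_of_finrank_le hsle (by omega)).symm

/-- The equivalence between bristle pairs and bristle lines, for a reduced
module. -/
noncomputable def bristleEquivLine [FiniteDimensional k V]
    (α : Fin n → V →ₗ[k] W) (hred : (⨅ i, LinearMap.ker (α i)) = ⊥) :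
    {p : Submodule k V × Submodule k W // IsBristle α p.1 p.2} ≃
      {U : Submodule k V //
        finrank k U = 1 ∧ finrank k ↥(⨆ i, U.map (α i)) = 1} where
  toFun p := ⟨p.1.1, p.2.2.1, by rw [← p.2.snd_eq]; exact p.2.2.2.1⟩
  invFun U := by
    refine ⟨(U.1, ⨆ i, U.1.map (α i)), fun i => le_iSup (fun j => Submodule.map (α j) U.1) i, U.2.1, U.2.2, ?_⟩
    obtain ⟨x, hx0, hxU⟩ := exists_span_singleton_of_finrank_eq_one U.2.1
    have hxmem : x ∈ U.1 := hxU ▸ mem_span_singleton_self x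
    have : ¬ (∀ i, α i x = 0) := by
      intro h
      apply hx0
      have : x ∈ (⨅ i, LinearMap.ker (α i)) := by
        simp only [Submodule.mem_iInf, LinearMap.mem_ker]
        exact h
      simpa [hred] using this
    push_neg at this
    obtain ⟨i, hi⟩ := this
    refine ⟨i, fun h => hi ?_⟩
    have hm : α i x ∈ Submodule.map (α i) U.1 := Submodule.mem_map_of_mem hxmem
    rw [h] at hm
    simpa using hm
  left_inv p := by
    apply Subtype.ext
    exact Prod.ext rfl p.2.snd_eq.symm
  right_inv U := rfl

end Aux

/-- for every reduced `n`-Kronecker module `M` with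
`dim M₁ = a`, `dim M₂ = b`, there is a reduced `n`-Kronecker module `N` with
`dim N₁ = dim N₂ = a′ ≤ a` and a bijection between the bristle submodules of
`M` and those of `N`. -/
theorem reduced_module_with_square_dimension_vector_and_same_bristles
    {k : Type*} [Field k] {n : ℕ} (hn : 1 ≤ n)
    {V W : Type*} [AddCommGroup V] [Module k V] [AddCommGroup W] [Module k W]
    [FiniteDimensional k V] [FiniteDimensional k W]
    (α : Fin n → V →ₗ[k] W)
    (hred : (⨅ i, LinearMap.ker (α i)) = ⊥) :
    ∃ a' : ℕ, a' ≤ finrank k V ∧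
      ∃ β : Fin n → ((Fin a' → k) →ₗ[k] (Fin a' → k)),
        (⨅ i, LinearMap.ker (β i)) = ⊥ ∧
        Nonempty
          ({p : Submodule k V × Submodule k W // IsBristle α p.1 p.2} ≃
           {p : Submodule k (Fin a' → k) × Submodule k (Fin a' → k) //
              IsBristle β p.1 p.2}) := by
  classical
  -- `X` is the set of "bristle vectors", `S` their span.
  set X : Set V := {x : V | x ≠ 0 ∧
      finrank k ↥(⨆ i, (span k {x}).map (α i)) = 1} with hX
  set S : Submodule k V := span k X with hS
  set m : ℕ := finrank k ↥S with hm
  have hnz : ∀ x : V, x ≠ 0 → ∃ i, α i x ≠ 0 := by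
    intro x hx0
    by_contra h
    push_neg at h
    apply hx0
    have : x ∈ (⨅ i, LinearMap.ker (α i)) := by
      simp only [Submodule.mem_iInf, LinearMap.mem_ker]
      exact h
    simpa [hred] using this
  -- every bristle line lies in `S`
  have hlineS : ∀ U : Submodule k V, finrank k ↥U = 1 →
      finrank k ↥(⨆ i, U.map (α i)) = 1 → U ≤ S := by
    intro U h1 h2
    obtain ⟨x, hx0, hxU⟩ := exists_span_singleton_of_finrank_eq_one h1
    have hxX : x ∈ X := ⟨hx0, by rw [← hxU]; exact h2⟩
    rw [hxU]
    exact (span_singleton_le_iff_mem x S).mpr (subset_span hxX)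
  set T : Submodule k W := ⨆ i, S.map (α i) with hT
  -- all images of a bristle vector lie on one line
  have hkey : ∀ x ∈ X, ∃ w : W, ∀ i, α i x ∈ (span k {w} : Submodule k W) := by
    intro x hx
    obtain ⟨hx0, hdim⟩ := hx
    obtain ⟨i0, hi0⟩ := hnz x hx0
    have hmem : ∀ i, α i x ∈ (⨆ i, (span k {x}).map (α i)) := fun i =>
      (le_iSup (fun i => (span k ({x} : Set V)).map (α i)) i)
        (mem_map_of_mem (mem_span_singleton_self x))
    have hle : span k {α i0 x} ≤ ⨆ i, (span k ({x} : Set V)).map (α i) :=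
      (span_singleton_le_iff_mem _ _).mpr (hmem i0)
    have heq : span k {α i0 x} = ⨆ i, (span k ({x} : Set V)).map (α i) :=
      Submodule.eq_of_le_of_finrank_le hle
        (by rw [finrank_span_singleton hi0, hdim])
    exact ⟨α i0 x, fun i => heq ▸ hmem i⟩
  -- `T` has dimension at most `m`
  obtain ⟨t, htX, htspan, htind⟩ := exists_linearIndependent k X
  haveI : Finite ↥t := htind.finite
  haveI : Fintype ↥t := Fintype.ofFinite _
  choose w hw using fun x : t => hkey x (htX x.2)
  have hSt : S = span k t := by rw [hS, htspan]
  have hTle : T ≤ span k (Set.range w) := by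
    rw [hT]
    refine iSup_le fun i => ?_
    rw [hSt, Submodule.map_span, span_le]
    rintro y ⟨x, hxt, rfl⟩
    have h1 := hw ⟨x, hxt⟩ i
    refine span_mono ?_ h1
    simp only [Set.singleton_subset_iff]
    exact ⟨⟨x, hxt⟩, rfl⟩
  have hTm : finrank k ↥T ≤ m := by
    have h1 : finrank k ↥T ≤ finrank k ↥(span k (Set.range w)) :=
      Submodule.finrank_mono hTle
    have h2 : finrank k ↥(span k (Set.range w)) ≤ Fintype.card ↥t :=
      finrank_range_le_card w
    have h3 : (Fintype.card ↥t : ℕ) = t.toFinset.card := (Set.toFinset_card t).symm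
    have h4 : finrank k ↥(span k t) = t.toFinset.card :=
      finrank_span_set_eq_card htind
    rw [hm, hSt]
    omega
  -- the maps
  have hrest : ∀ i, ∀ x ∈ S, α i x ∈ T := fun i x hx =>
    (le_iSup (fun i => S.map (α i)) i) (mem_map_of_mem hx)
  set eS : (Fin m → k) ≃ₗ[k] ↥S := (Module.finBasis k ↥S).equivFun.symm with heS
  set g : (Fin m → k) →ₗ[k] V := S.subtype ∘ₗ eS.toLinearMap with hg
  have hginj : Function.Injective g := by
    rw [hg]
    exact (Submodule.injective_subtype S).comp eS.injective
  have hgrange : LinearMap.range g = S := by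
    rw [hg, LinearMap.range_comp, LinearEquiv.range, Submodule.map_top,
      Submodule.range_subtype]
  set ρ : Fin n → (Fin m → k) →ₗ[k] ↥T :=
    fun i => ((α i).restrict (hrest i)) ∘ₗ eS.toLinearMap with hρ
  set pad : (Fin (finrank k ↥T) → k) →ₗ[k] (Fin m → k) :=
    Function.ExtendByZero.linearMap k (Fin.castLE hTm) with hpad
  have hpadinj : Function.Injective pad := by
    intro a b hab
    funext j
    have h1 := congrFun hab (Fin.castLE hTm j)
    rw [hpad] at h1
    simpa [Function.ExtendByZero.linearMap_apply,
      (Fin.castLE_injective hTm).extend_apply] using h1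
  set ι : ↥T →ₗ[k] (Fin m → k) :=
    pad ∘ₗ (Module.finBasis k ↥T).equivFun.toLinearMap with hι
  have hιinj : Function.Injective ι := by
    rw [hι]
    exact hpadinj.comp (Module.finBasis k ↥T).equivFun.injective
  set β : Fin n → (Fin m → k) →ₗ[k] (Fin m → k) := fun i => ι ∘ₗ ρ i with hβ
  have hαg : ∀ i, (α i) ∘ₗ g = T.subtype ∘ₗ ρ i := by
    intro i
    ext x
    rfl
  -- β is reduced
  have hβred : (⨅ i, LinearMap.ker (β i)) = ⊥ := by
    rw [eq_bot_iff]
    intro x hx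
    simp only [Submodule.mem_iInf, LinearMap.mem_ker] at hx
    have h1 : ∀ i, α i (g x) = 0 := by
      intro i
      have h2 : ρ i x = 0 := hιinj (by simpa [hβ] using hx i)
      have h3 : (α i ∘ₗ g) x = T.subtype (ρ i x) := by rw [hαg i]; rfl
      simpa [h2] using h3
    have h4 : g x ∈ (⨅ i, LinearMap.ker (α i)) := by
      simp only [Submodule.mem_iInf, LinearMap.mem_ker]
      exact h1
    rw [hred, Submodule.mem_bot] at h4
    have h5 : x = 0 := hginj (by simpa using h4)
    simp [h5]
  -- dimension bookkeeping for images of lines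
  have hrk2 : ∀ L : Submodule k (Fin m → k),
      finrank k ↥(⨆ i, (L.map g).map (α i)) = finrank k ↥(⨆ i, L.map (β i)) := by
    intro L
    have h1 : (⨆ i, (L.map g).map (α i)) = (⨆ i, L.map (ρ i)).map T.subtype := by
      rw [Submodule.map_iSup]
      refine iSup_congr fun i => ?_
      rw [← Submodule.map_comp, hαg i, Submodule.map_comp]
    have h2 : (⨆ i, L.map (β i)) = (⨆ i, L.map (ρ i)).map ι := by
      rw [Submodule.map_iSup]
      refine iSup_congr fun i => ?_
      rw [hβ, Submodule.map_comp]
    rw [h1, h2, finrank_map_inj _ (Submodule.injective_subtype T),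
      finrank_map_inj _ hιinj]
  have hfor : ∀ L : Submodule k (Fin m → k),
      (finrank k ↥L = 1 ∧ finrank k ↥(⨆ i, L.map (β i)) = 1) ↔
      (finrank k ↥(L.map g) = 1 ∧
        finrank k ↥(⨆ i, (L.map g).map (α i)) = 1) := by
    intro L
    rw [finrank_map_inj g hginj L, hrk2 L]
  -- the equivalence between bristle lines
  have equivLines : {U : Submodule k V //
      finrank k ↥U = 1 ∧ finrank k ↥(⨆ i, U.map (α i)) = 1} ≃
      {L : Submodule k (Fin m → k) //
      finrank k ↥L = 1 ∧ finrank k ↥(⨆ i, L.map (β i)) = 1} := by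
    have hmc : ∀ U : Submodule k V,
        finrank k ↥U = 1 → finrank k ↥(⨆ i, U.map (α i)) = 1 →
        (U.comap g).map g = U := by
      intro U h1 h2
      rw [Submodule.map_comap_eq, hgrange]
      exact inf_eq_right.mpr (hlineS U h1 h2)
    refine ⟨fun U => ⟨U.1.comap g, ?_⟩, fun L => ⟨L.1.map g, (hfor L.1).mp L.2⟩,
      ?_, ?_⟩
    · rw [hfor, hmc U.1 U.2.1 U.2.2]
      exact U.2
    · intro U
      exact Subtype.ext (hmc U.1 U.2.1 U.2.2)
    · intro L
      exact Subtype.ext (Submodule.comap_map_eq_of_injective hginj L.1)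
  exact ⟨m, Submodule.finrank_le S, β, hβred,
    ⟨(bristleEquivLine α hred).trans
      (equivLines.trans (bristleEquivLine β hβred).symm)⟩⟩
end

section
/- Square-matrix version of Theorem 1: Let k be an algebraically closed field and let q₁, …, q_m be homogeneous quadratic polynomials in the variables X₁, …, X_n over k. Then there exist a natural number a and a reduced matrix pencil P = (a, a; α₁, …, α_n) consisting of square matrices (i.e., n linear maps α_i : k^a → k^a), together with a bijection from the set ε(P) of equivalence classes of eigenvectors of P onto the projective zero set {(λ₁ : … : λ_n) ∈ ℙ(k^n) : q_j(λ₁, …, λ_n) = 0 for all j = 1, …, m}, which sends the class of an eigenvector v to the eigenvalue of v. -/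
/-!
Write `ν(λ) = λλᵀ` for the quadratic Veronese map. A quadratic form in `λ` is a linear form in
`ν(λ)`, so the zero set `X` of the `q_j` is the set of points `[λ]` with `ν(λ)` in a linear
subspace `U`. The pencil acts on the span `W` of `ν(X)`: `α_i` takes the `i`-th row of `V ∈ W`
and then applies a linear map into `k ^ dim W` that is injective on the span `L` of the cone
over `X`. Such a map exists because `dim L ≤ dim W`: a nonzero row `λ_t λ` of `ν(λ)` recovers
`λ`. The rows of `ν(λ)` are the multiples `λ_i λ` of one vector, so `ν(λ)` is an eigenvector
with eigenvalue `λ`. Conversely the rows of an eigenvector `V` are multiples of one vector, and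
since `V` is symmetric it is a multiple of some `ν(λ)`, which then lies in `W ⊆ U`.
-/

open Module Submodule
open scoped LinearAlgebra.Projectivization Pointwise

section SpanRange

variable {k V V' ι : Type*} [Field k] [AddCommGroup V] [Module k V] [AddCommGroup V'] [Module k V']

theorem exists_eq_smul_of_finrank_span_range_eq_one {f : ι → V}
    (h : finrank k (span k (Set.range f)) = 1) : ∃ (w : V) (c : ι → k), ∀ i, f i = c i • w := by
  obtain ⟨w, -, hw⟩ := finrank_eq_one_iff'.mp h
  choose c hc using fun i => hw ⟨f i, subset_span ⟨i, rfl⟩⟩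
  exact ⟨w, c, fun i => (congrArg Subtype.val (hc i)).symm⟩

theorem finrank_span_range_smul_eq_one {c : ι → k} (hc : c ≠ 0) {w : V} (hw : w ≠ 0) :
    finrank k (span k (Set.range fun i => c i • w)) = 1 := by
  obtain ⟨i, hi⟩ := Function.ne_iff.mp hc
  suffices span k (Set.range fun i => c i • w) = k ∙ w by rw [this, finrank_span_singleton hw]
  refine le_antisymm (span_le.mpr ?_) (span_singleton_le_iff_mem _ _ |>.mpr ?_)
  · rintro _ ⟨j, rfl⟩
    exact smul_mem _ _ (mem_span_singleton_self w)
  · simpa [smul_smul, inv_mul_cancel₀ hi] using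
      smul_mem (span k (Set.range fun i => c i • w)) (c i)⁻¹ (subset_span ⟨i, rfl⟩)

theorem finrank_span_range_comp_of_injOn {π : V →ₗ[k] V'} {p : Submodule k V}
    (hπ : Set.InjOn π p) {f : ι → V} (hf : ∀ i, f i ∈ p) :
    finrank k (span k (Set.range (π ∘ f))) = finrank k (span k (Set.range f)) := by
  have hle : span k (Set.range f) ≤ p := span_le.mpr (Set.range_subset_iff.mpr hf)
  rw [Set.range_comp, ← map_span, ← LinearMap.range_domRestrict]
  exact LinearMap.finrank_range_of_inj fun x y hxy => Subtype.ext (hπ (hle x.2) (hle y.2) hxy)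

def eigenvectorClasses (α : ι → V →ₗ[k] V') : Set (ℙ k V) :=
  {x | ∃ (v : V) (hv : v ≠ 0), Projectivization.mk k v hv = x ∧
    finrank k (span k (Set.range fun i => α i v)) = 1}

theorem mk_mem_eigenvectorClasses_iff (α : ι → V →ₗ[k] V') {v : V} (hv : v ≠ 0) :
    Projectivization.mk k v hv ∈ eigenvectorClasses α ↔
      finrank k (span k (Set.range fun i => α i v)) = 1 := by
  refine ⟨?_, fun h => ⟨v, hv, rfl, h⟩⟩
  rintro ⟨w, hw, hwv, h⟩
  obtain ⟨c, rfl⟩ := (Projectivization.mk_eq_mk_iff k _ _ hw hv).mp hwv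
  have : (Set.range fun i => α i (c • v)) = (c : k) • Set.range fun i => α i v := by
    simp [Set.smul_set_range, Units.smul_def]
  rwa [this, span_smul_eq_of_isUnit _ _ c.isUnit] at h

end SpanRange

section Veronese

variable {k ι : Type*}

section CommSemiring

variable [CommSemiring k]

def veronese (v : ι → k) : ι → ι → k := fun s t => v s * v t

theorem veronese_apply (v : ι → k) (i : ι) : veronese v i = v i • v := rfl

theorem veronese_smul (c : k) (v : ι → k) : veronese (c • v) = (c * c) • veronese v := by
  ext s t
  simp only [veronese, Pi.smul_apply, smul_eq_mul]
  ring

end CommSemiring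

variable [Field k]

theorem veronese_eq_zero_iff {v : ι → k} : veronese v = 0 ↔ v = 0 := by
  refine ⟨fun h => funext fun s => ?_, fun h => ?_⟩
  · simpa [veronese] using congr_fun (congr_fun h s) s
  · ext s t
    simp [h, veronese]

theorem veronese_ne_zero {v : ι → k} (hv : v ≠ 0) : veronese v ≠ 0 :=
  veronese_eq_zero_iff.not.mpr hv

/-- Reading off a row `t` with `v t ≠ 0` recovers `v` up to a scalar from `veronese v`. -/
theorem mem_span_of_veronese_mem_span {S : Set (ι → k)} {v : ι → k}
    (h : veronese v ∈ span k (veronese '' S)) : v ∈ span k S := by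
  obtain rfl | ⟨t, ht⟩ := (eq_or_ne v 0).imp_right Function.ne_iff.mp
  · exact zero_mem _
  have hrow : (LinearMap.proj t : (ι → ι → k) →ₗ[k] (ι → k)) (veronese v) ∈ span k S := by
    refine (map_span_le (LinearMap.proj t) _ _).mpr ?_ (mem_map_of_mem h)
    rintro _ ⟨w, hw, rfl⟩
    exact smul_mem _ _ (subset_span hw)
  exact (smul_mem_iff _ ht).mp hrow

theorem exists_smul_eq_of_veronese_eq_smul {v w : ι → k} {c : k}
    (h : c • veronese w = veronese v) : ∃ d : k, d • w = v := by
  refine mem_span_singleton.mp (mem_span_of_veronese_mem_span ?_)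
  rw [Set.image_singleton, ← h]
  exact smul_mem _ _ (mem_span_singleton_self _)

theorem rank_span_le_rank_span_image_veronese (S : Set (ι → k)) :
    Module.rank k (span k S) ≤ Module.rank k (span k (veronese '' S)) := by
  obtain ⟨b, hbS, hb_span, hb_li⟩ := exists_linearIndependent k (veronese '' S)
  obtain ⟨T, rfl, hT⟩ :=
    Set.exists_image_eq_injOn_of_subset_range (hbS.trans (Set.image_subset_range _ _))
  have hST : span k S ≤ span k T := span_le.mpr fun v hv =>
    mem_span_of_veronese_mem_span (hb_span ▸ subset_span ⟨v, hv, rfl⟩)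
  calc Module.rank k (span k S) ≤ Module.rank k (span k T) := Submodule.rank_mono hST
    _ ≤ Cardinal.mk T := rank_span_le T
    _ = Cardinal.mk (veronese '' T) := (Cardinal.mk_image_eq_of_injOn _ _ hT).symm
    _ = Module.rank k (span k (veronese '' S)) := by rw [← hb_span, rank_span_set hb_li]

theorem exists_eq_smul_veronese {V : ι → ι → k} (hV : ∀ s t, V s t = V t s) {w : ι → k}
    {c : ι → k} (hrows : ∀ i, V i = c i • w) : ∃ d : k, V = d • veronese c := by
  have hcw : ∀ s t, V s t = c s * w t := fun s t => by rw [hrows]; rfl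
  by_cases hV0 : V = 0
  · exact ⟨0, by rw [hV0, zero_smul]⟩
  obtain ⟨s, t, hst⟩ : ∃ s t, V s t ≠ 0 := by
    by_contra! h
    exact hV0 (funext₂ h)
  have ht : c t ≠ 0 := fun h0 => hst (by rw [hV, hcw, h0, zero_mul])
  refine ⟨w t / c t, funext₂ fun a b => ?_⟩
  have hsym : w b * c t = c b * w t := by rw [mul_comm, ← hcw, hV, hcw]
  simp only [hcw, Pi.smul_apply, veronese, smul_eq_mul]
  field_simp
  linear_combination c a * hsym

end Veronese

namespace Projectivization

variable {k ι : Type*} [Field k]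

def veronese : ℙ k (ι → k) → ℙ k (ι → ι → k) :=
  Projectivization.lift (fun v => mk k (_root_.veronese v.1) (veronese_ne_zero v.2)) <| by
    rintro ⟨v, hv⟩ ⟨w, hw⟩ c (rfl : v = c • w)
    exact (mk_eq_mk_iff' k _ _ _ _).mpr ⟨c * c, (veronese_smul c w).symm⟩

theorem veronese_mk (v : ι → k) (hv : v ≠ 0) :
    veronese (mk k v hv) = mk k (_root_.veronese v) (veronese_ne_zero hv) :=
  Projectivization.lift_mk _ _ v hv

theorem veronese_injective : Function.Injective (veronese : ℙ k (ι → k) → _) := by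
  intro x y
  induction x with | h v hv => ?_
  induction y with | h w hw => ?_
  rw [veronese_mk, veronese_mk, mk_eq_mk_iff', mk_eq_mk_iff']
  rintro ⟨c, hc⟩
  exact exists_smul_eq_of_veronese_eq_smul hc

end Projectivization

theorem exists_linearMap_injOn_of_finrank_le {k V V' : Type*} [Field k] [AddCommGroup V]
    [Module k V] [AddCommGroup V'] [Module k V'] [FiniteDimensional k V']
    {p : Submodule k V} [FiniteDimensional k p] (h : finrank k p ≤ finrank k V') :
    ∃ π : V →ₗ[k] V', Set.InjOn π p := by
  obtain ⟨f, hf⟩ := finrank_le_iff_exists_linearMap.mp h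
  obtain ⟨π, rfl⟩ := LinearMap.exists_extend f
  exact ⟨π, fun x hx y hy hxy => congrArg Subtype.val (hf (a₁ := ⟨x, hx⟩) (a₂ := ⟨y, hy⟩) hxy)⟩

section VeroneseLocus

variable {k ι : Type*} [Field k] (U : Submodule k (ι → ι → k))

def veroneseLocus : Set (ℙ k (ι → k)) :=
  {y | ∀ (v : ι → k) (hv : v ≠ 0), Projectivization.mk k v hv = y → veronese v ∈ U}

def veroneseSpan : Submodule k (ι → ι → k) :=
  span k (veronese '' (veronese ⁻¹' U))

variable {U}

theorem mk_mem_veroneseLocus_iff {v : ι → k} (hv : v ≠ 0) :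
    Projectivization.mk k v hv ∈ veroneseLocus U ↔ veronese v ∈ U := by
  refine ⟨fun h => h v hv rfl, fun h w hw hwv => ?_⟩
  obtain ⟨c, rfl⟩ := (Projectivization.mk_eq_mk_iff' k _ _ hw hv).mp hwv
  rw [veronese_smul]
  exact U.smul_mem _ h

theorem veroneseSpan_le : veroneseSpan U ≤ U :=
  span_le.mpr (Set.image_preimage_subset _ _)

theorem apply_mem_span_of_mem_veroneseSpan {V : ι → ι → k} (hV : V ∈ veroneseSpan U) (i : ι) :
    V i ∈ span k (veronese ⁻¹' U) := by
  refine (map_span_le (LinearMap.proj i : (ι → ι → k) →ₗ[k] (ι → k)) _ _).mpr ?_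
    (mem_map_of_mem hV)
  rintro _ ⟨v, hv, rfl⟩
  exact smul_mem _ _ (subset_span hv)

theorem symm_of_mem_veroneseSpan {V : ι → ι → k} (hV : V ∈ veroneseSpan U) (s t : ι) :
    V s t = V t s := by
  induction hV using span_induction with
  | mem x hx =>
    obtain ⟨v, -, rfl⟩ := hx
    exact mul_comm _ _
  | zero => rfl
  | add x y _ _ hx hy => simp [hx, hy]
  | smul c x _ hx => simp [hx]

theorem finrank_span_range_eq_one_iff_mem_image_veronese {V : ι → ι → k}
    (hVU : V ∈ veroneseSpan U) (hV : V ≠ 0) :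
    finrank k (span k (Set.range V)) = 1 ↔
      Projectivization.mk k V hV ∈ Projectivization.veronese '' veroneseLocus U := by
  constructor
  · intro h
    obtain ⟨w, c, hrows⟩ := exists_eq_smul_of_finrank_span_range_eq_one h
    obtain ⟨d, rfl⟩ := exists_eq_smul_veronese (symm_of_mem_veroneseSpan hVU) hrows
    have hd : d ≠ 0 := by rintro rfl; simp at hV
    have hc : c ≠ 0 := by rintro rfl; simp [veronese_eq_zero_iff.mpr rfl] at hV
    refine ⟨Projectivization.mk k c hc, (mk_mem_veroneseLocus_iff hc).mpr ?_, ?_⟩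
    · simpa [smul_smul, inv_mul_cancel₀ hd] using U.smul_mem d⁻¹ (veroneseSpan_le hVU)
    · rw [Projectivization.veronese_mk, Projectivization.mk_eq_mk_iff']
      exact ⟨d⁻¹, by rw [smul_smul, inv_mul_cancel₀ hd, one_smul]⟩
  · rintro ⟨y, hy, hyV⟩
    induction y with | h v hv => ?_
    rw [Projectivization.veronese_mk, eq_comm, Projectivization.mk_eq_mk_iff'] at hyV
    obtain ⟨d, rfl⟩ := hyV
    have hd : d ≠ 0 := by rintro rfl; simp at hV
    have hrows : (d • veronese v : ι → ι → k) = fun i => (d * v i) • v := by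
      ext i t
      simp [veronese, mul_assoc]
    rw [hrows]
    exact finrank_span_range_smul_eq_one (by simpa [funext_iff, hd] using hv) hv

theorem finrank_span_preimage_veronese_le [Finite ι] :
    finrank k (span k (veronese ⁻¹' (U : Set (ι → ι → k)))) ≤ finrank k (veroneseSpan U) :=
  finrank_le_finrank_of_rank_le_rank
    (by rw [Cardinal.lift_id, Cardinal.lift_id]; exact rank_span_le_rank_span_image_veronese _)
    (rank_lt_aleph0 _ _)

end VeroneseLocus

section RowPencil

variable {k ι A B : Type*} [Field k] [AddCommGroup A] [Module k A] [AddCommGroup B] [Module k B]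
  {U : Submodule k (ι → ι → k)}

def rowPencil (e : A ≃ₗ[k] veroneseSpan U) (π : (ι → k) →ₗ[k] B) (i : ι) : A →ₗ[k] B :=
  π ∘ₗ LinearMap.proj i ∘ₗ (veroneseSpan U).subtype ∘ₗ e.toLinearMap

variable (e : A ≃ₗ[k] veroneseSpan U) {π : (ι → k) →ₗ[k] B}

theorem rowPencil_reduced (hπ : Set.InjOn π (span k (veronese ⁻¹' (U : Set (ι → ι → k))))) :
    (⨅ i, LinearMap.ker (rowPencil e π i)) = ⊥ := by
  refine eq_bot_iff.mpr fun v hv => (mem_bot k).mpr ?_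
  simp only [mem_iInf, LinearMap.mem_ker] at hv
  have hrow (i : ι) : (e v : ι → ι → k) i = 0 :=
    hπ (apply_mem_span_of_mem_veroneseSpan (e v).2 i) (zero_mem _) ((hv i).trans (map_zero π).symm)
  simpa using (funext hrow : (e v : ι → ι → k) = 0)

theorem mk_mem_eigenvectorClasses_rowPencil_iff
    (hπ : Set.InjOn π (span k (veronese ⁻¹' (U : Set (ι → ι → k))))) {v : A} (hv : v ≠ 0) :
    Projectivization.mk k v hv ∈ eigenvectorClasses (rowPencil e π) ↔
      Projectivization.mk k (e v : ι → ι → k) (by simpa using hv) ∈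
        Projectivization.veronese '' veroneseLocus U := by
  rw [mk_mem_eigenvectorClasses_iff, ← finrank_span_range_eq_one_iff_mem_image_veronese (e v).2]
  exact Eq.congr_left (finrank_span_range_comp_of_injOn hπ
    (apply_mem_span_of_mem_veroneseSpan (e v).2))

end RowPencil

theorem exists_square_pencil_eigenvectorClasses_equiv_veroneseLocus {k ι : Type*} [Field k]
    [Finite ι] (U : Submodule k (ι → ι → k)) :
    ∃ (a : ℕ) (α : ι → (Fin a → k) →ₗ[k] (Fin a → k)),
      (⨅ i, LinearMap.ker (α i)) = ⊥ ∧
      ∃ F : eigenvectorClasses α ≃ veroneseLocus U,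
        ∀ (x : eigenvectorClasses α) (v : Fin a → k) (hv : v ≠ 0),
          Projectivization.mk k v hv = x →
          ∀ (lam : ι → k) (hlam : lam ≠ 0), Projectivization.mk k lam hlam = F x →
            ∃ w : Fin a → k, w ≠ 0 ∧ ∀ i, α i v = lam i • w := by
  let W := veroneseSpan U
  let e : (Fin (finrank k W) → k) ≃ₗ[k] W := (finBasis k W).equivFun.symm
  obtain ⟨π, hπ⟩ : ∃ π : (ι → k) →ₗ[k] (Fin (finrank k W) → k),
      Set.InjOn π (span k (veronese ⁻¹' (U : Set (ι → ι → k)))) :=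
    exists_linearMap_injOn_of_finrank_le
      (by rw [finrank_fin_fun]; exact finrank_span_preimage_veronese_le)
  have hπ0 {u : ι → k} (hu : veronese u ∈ U) (h : π u = 0) : u = 0 :=
    hπ (subset_span hu) (zero_mem _) (h.trans (map_zero π).symm)
  let E := Projectivization.map (W.subtype ∘ₗ e.toLinearMap) (W.injective_subtype.comp e.injective)
  have hrange : Projectivization.veronese '' veroneseLocus U ⊆ Set.range E := by
    rintro _ ⟨y, hy, rfl⟩
    induction y with | h v hv => ?_
    have hvW : veronese v ∈ W := subset_span ⟨v, (mk_mem_veroneseLocus_iff hv).mp hy, rfl⟩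
    refine ⟨Projectivization.mk k (e.symm ⟨_, hvW⟩) (by simpa using veronese_ne_zero hv), ?_⟩
    simp [E, Projectivization.map_mk, Projectivization.veronese_mk]
  have hE : E '' eigenvectorClasses (rowPencil e π) =
      Projectivization.veronese '' veroneseLocus U := by
    refine (congrArg _ (Set.ext fun x => ?_)).trans (Set.image_preimage_eq_of_subset hrange)
    induction x with | h v hv => exact mk_mem_eigenvectorClasses_rowPencil_iff e hπ hv
  let F := (Equiv.Set.image E _ (Projectivization.map_injective _ _)).trans
    ((Equiv.setCongr hE).trans (Equiv.Set.image _ _ Projectivization.veronese_injective).symm)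
  refine ⟨_, rowPencil e π, rowPencil_reduced e hπ, F, fun x v hv hvx lam hlam hlamx => ?_⟩
  have hFx : Projectivization.veronese (F x) = E x := congrArg Subtype.val
    ((Equiv.Set.image _ _ Projectivization.veronese_injective).apply_symm_apply _)
  have hlamU : veronese lam ∈ U := (mk_mem_veroneseLocus_iff hlam).mp (hlamx ▸ (F x).2)
  rw [← hlamx, ← hvx, Projectivization.veronese_mk, show E _ = _ from Projectivization.map_mk ..,
    eq_comm, Projectivization.mk_eq_mk_iff'] at hFx
  obtain ⟨c, hc⟩ := hFx
  have hc0 : c ≠ 0 := by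
    rintro rfl
    exact hv (by simpa using hc.symm)
  refine ⟨c • π lam, smul_ne_zero hc0 fun h => hlam (hπ0 hlamU h), fun i => ?_⟩
  change π ((e v : ι → ι → k) i) = _
  rw [← show c • veronese lam = e v from hc, Pi.smul_apply, veronese_apply, map_smul, map_smul,
    smul_comm]

theorem Finsupp.exists_eq_single_add_single_of_degree_eq_two {σ : Type*} {d : σ →₀ ℕ}
    (hd : d.degree = 2) : ∃ s t, d = single s 1 + single t 1 := by
  classical
  obtain ⟨s, t, hst⟩ := Multiset.card_eq_two.mp ((card_toMultiset d).trans hd)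
  refine ⟨s, t, ?_⟩
  rw [← toMultiset_toFinsupp d, hst, Multiset.insert_eq_cons, ← Multiset.singleton_add,
    Multiset.toFinsupp_add, Multiset.toFinsupp_singleton, Multiset.toFinsupp_singleton]

theorem MvPolynomial.IsHomogeneous.exists_linearMap_veronese_eq_eval {k ι : Type*}
    [CommSemiring k] {q : MvPolynomial ι k} (hq : q.IsHomogeneous 2) :
    ∃ Φ : (ι → ι → k) →ₗ[k] k, ∀ v, Φ (veronese v) = eval v q := by
  rw [← mem_homogeneousSubmodule, homogeneousSubmodule_eq_finsupp_supported,
    AddMonoidAlgebra.supported_eq_span_single] at hq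
  induction hq using span_induction with
  | mem p hp =>
    obtain ⟨d, hd, rfl⟩ := hp
    obtain ⟨s, t, rfl⟩ := Finsupp.exists_eq_single_add_single_of_degree_eq_two hd
    refine ⟨LinearMap.proj t ∘ₗ LinearMap.proj s, fun v => ?_⟩
    simp [single_eq_monomial, veronese, eval_monomial, Finsupp.prod_add_index', pow_add]
  | zero => exact ⟨0, by simp⟩
  | add p q _ _ hp hq =>
    obtain ⟨Φ, hΦ⟩ := hp
    obtain ⟨Ψ, hΨ⟩ := hq
    exact ⟨Φ + Ψ, by simp [hΦ, hΨ]⟩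
  | smul c p _ hp =>
    obtain ⟨Φ, hΦ⟩ := hp
    exact ⟨c • Φ, by simp [hΦ]⟩

theorem every_projective_variety_is_an_eigenvector_variety_of_square_pencil_general
    {k : Type*} [Field k] {n m : ℕ}
    (q : Fin m → MvPolynomial (Fin n) k) (hq : ∀ j, (q j).IsHomogeneous 2) :
    ∃ (a : ℕ) (α : Fin n → ((Fin a → k) →ₗ[k] (Fin a → k))),
      -- `P` is reduced
      (⨅ i, LinearMap.ker (α i)) = ⊥ ∧
      -- a bijection from `ε(P)` onto the projective zero set of `q₁, …, q_m`
      ∃ F : {x : Projectivization k (Fin a → k) |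
                ∃ (v : Fin a → k) (hv : v ≠ 0), Projectivization.mk k v hv = x ∧
                  finrank k (span k (Set.range fun i => α i v)) = 1} ≃
            {y : Projectivization k (Fin n → k) |
                ∀ (lam : Fin n → k) (hlam : lam ≠ 0),
                  Projectivization.mk k lam hlam = y →
                  ∀ j, MvPolynomial.eval lam (q j) = 0},
        -- `F` sends the class of an eigenvector `v` to its eigenvalue:
        -- for every representative `v` of `x` and every representative `lam`
        -- of `F x` there is `w ≠ 0` with `α_i(v) = lam_i • w` for all `i`
        ∀ (x : {x : Projectivization k (Fin a → k) |
                ∃ (v : Fin a → k) (hv : v ≠ 0), Projectivization.mk k v hv = x ∧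
                  finrank k (span k (Set.range fun i => α i v)) = 1})
          (v : Fin a → k) (hv : v ≠ 0),
          Projectivization.mk k v hv = (x : Projectivization k (Fin a → k)) →
          ∀ (lam : Fin n → k) (hlam : lam ≠ 0),
            Projectivization.mk k lam hlam = (F x : Projectivization k (Fin n → k)) →
            ∃ w : Fin a → k, w ≠ 0 ∧ ∀ i, α i v = lam i • w := by
  choose Φ hΦ using fun j => (hq j).exists_linearMap_veronese_eq_eval
  obtain ⟨a, α, hred, F, hF⟩ :=
    exists_square_pencil_eigenvectorClasses_equiv_veroneseLocus (⨅ j, LinearMap.ker (Φ j))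
  have hlocus : veroneseLocus (⨅ j, LinearMap.ker (Φ j)) =
      {y | ∀ (lam : Fin n → k) (hlam : lam ≠ 0), Projectivization.mk k lam hlam = y →
        ∀ j, MvPolynomial.eval lam (q j) = 0} := by
    ext y
    simp [veroneseLocus, mem_iInf, hΦ]
  exact ⟨a, α, hred, F.trans (Equiv.setCongr hlocus), hF⟩

/-- square-matrix version of Theorem 1: over an algebraically
closed field `k`, for any homogeneous quadratic polynomials `q₁, …, q_m` in
`X₁, …, X_n` there is a reduced matrix pencil `P = (a, a; α₁, …, α_n)`
consisting of square matrices and a bijection from `ε(P)` onto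
the projective zero set `{(λ₁ : … : λ_n) ∈ ℙ(k^n) : q_j(λ) = 0 for all j}`
sending the class of an eigenvector to its eigenvalue. -/
theorem every_projective_variety_is_an_eigenvector_variety_of_square_pencil
    {k : Type*} [Field k] [IsAlgClosed k] {n m : ℕ}
    (q : Fin m → MvPolynomial (Fin n) k) (hq : ∀ j, (q j).IsHomogeneous 2) :
    ∃ (a : ℕ) (α : Fin n → ((Fin a → k) →ₗ[k] (Fin a → k))),
      -- `P` is reduced
      (⨅ i, LinearMap.ker (α i)) = ⊥ ∧
      -- a bijection from `ε(P)` onto the projective zero set of `q₁, …, q_m`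
      ∃ F : {x : Projectivization k (Fin a → k) |
                ∃ (v : Fin a → k) (hv : v ≠ 0), Projectivization.mk k v hv = x ∧
                  finrank k (span k (Set.range fun i => α i v)) = 1} ≃
            {y : Projectivization k (Fin n → k) |
                ∀ (lam : Fin n → k) (hlam : lam ≠ 0),
                  Projectivization.mk k lam hlam = y →
                  ∀ j, MvPolynomial.eval lam (q j) = 0},
        -- `F` sends the class of an eigenvector `v` to its eigenvalue:
        -- for every representative `v` of `x` and every representative `lam`
        -- of `F x` there is `w ≠ 0` with `α_i(v) = lam_i • w` for all `i`
        ∀ (x : {x : Projectivization k (Fin a → k) |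
                ∃ (v : Fin a → k) (hv : v ≠ 0), Projectivization.mk k v hv = x ∧
                  finrank k (span k (Set.range fun i => α i v)) = 1})
          (v : Fin a → k) (hv : v ≠ 0),
          Projectivization.mk k v hv = (x : Projectivization k (Fin a → k)) →
          ∀ (lam : Fin n → k) (hlam : lam ≠ 0),
            Projectivization.mk k lam hlam = (F x : Projectivization k (Fin n → k)) →
            ∃ w : Fin a → k, w ≠ 0 ∧ ∀ i, α i v = lam i • w :=
  every_projective_variety_is_an_eigenvector_variety_of_square_pencil_general q hq
end

section
/- Preprojective matrix pencils have no eigenvectors: let n ≥ 2 and let P = (a, b; α₁, …, α_n) be a matrix pencil over a field k such that a < b, a² + b² − n·a·b = 1, and the associated n-Kronecker module (k^a, k^b; α₁, …, α_n) is indecomposable (i.e., whenever k^a = U₁ ⊕ W₁ and k^b = U₂ ⊕ W₂ with α_i(U₁) ⊆ U₂ and α_i(W₁) ⊆ W₂ for all i, then U₁ = 0 and U₂ = 0, or W₁ = 0 and W₂ = 0). Then P has no eigenvector: there is no nonzero v ∈ k^a for which the subspace ⟨α₁(v), …, α_n(v)⟩ of k^b is one-dimensional. -/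
/-!
Induction on `a` along Bernstein–Gelfand–Ponomarev reflections.  For an indecomposable pencil
with `a ≠ 0` the map `Φ : (k^a)^n → k^b, (y_i) ↦ ∑ α_i y_i` is onto, so its kernel `K` has
dimension `n a - b`, and the coordinate projections `K → k^a` form an indecomposable pencil with
dimension vector `(n a - b, a)`: again a preprojective root, with smaller first entry.  If
`v` is an eigenvector then, as `n ≥ 2`, the one-dimensional span of the `α_i v` carries a
nontrivial relation `∑ μ_i α_i v = 0`, i.e. `(μ_i v)_i ∈ K`, and this is an eigenvector of the
reflected pencil.  The descent ends at `a = 0`, where there are no nonzero vectors.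
-/

open Module Submodule

namespace Submodule

variable {R M N ι : Type*} [Ring R] [AddCommGroup M] [Module R M] [AddCommGroup N] [Module R N]

lemma isCompl_pi_univ {φ : ι → Type*} [∀ i, AddCommGroup (φ i)] [∀ i, Module R (φ i)]
    {p q : ∀ i, Submodule R (φ i)} (h : ∀ i, IsCompl (p i) (q i)) :
    IsCompl (pi Set.univ p) (pi Set.univ q) := by
  constructor
  · rw [disjoint_def]
    intro x hp hq
    funext i
    exact disjoint_def.mp (h i).disjoint _ (hp i trivial) (hq i trivial)
  · rw [codisjoint_iff, eq_top_iff]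
    rintro x -
    choose y hy z hz hyz using fun i => mem_sup.mp ((h i).sup_eq_top ▸ mem_top : x i ∈ p i ⊔ q i)
    exact mem_sup.mpr ⟨y, fun i _ => hy i, z, fun i _ => hz i, funext hyz⟩

lemma isCompl_map_of_ker_le {f : M →ₗ[R] N} (hf : Function.Surjective f) {p q : Submodule R M}
    (hpq : IsCompl p q) (hker : f.ker ≤ p ⊓ f.ker ⊔ q ⊓ f.ker) :
    IsCompl (p.map f) (q.map f) := by
  refine ⟨?_, codisjoint_map hf hpq.codisjoint⟩
  rw [disjoint_def]
  rintro _ ⟨x, hx, rfl⟩ ⟨y, hy, hyx⟩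
  have hxy : x - y ∈ f.ker := by simp [hyx]
  obtain ⟨x', ⟨hx', hx'K⟩, y', ⟨hy', -⟩, hsum⟩ := mem_sup.mp (hker hxy)
  have hx_eq : x - x' = y + y' := by rw [eq_sub_of_add_eq hsum]; abel
  have : x - x' = 0 :=
    disjoint_def.mp hpq.disjoint _ (sub_mem hx hx') (hx_eq ▸ add_mem hy hy')
  rw [sub_eq_zero.mp this]
  exact hx'K

lemma span_range_smul_eq_span_singleton {k : Type*} [DivisionRing k] [Module k M] {μ : ι → k}
    {i₀ : ι} (hi₀ : μ i₀ ≠ 0) (v : M) :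
    span k (Set.range fun i => μ i • v) = k ∙ v := by
  refine le_antisymm (span_le.mpr <| Set.range_subset_iff.mpr fun i =>
    smul_mem _ _ (mem_span_singleton_self v)) ?_
  rw [span_singleton_le_iff_mem, ← smul_mem_iff _ hi₀]
  exact subset_span ⟨i₀, rfl⟩

end Submodule

/-- `(c, a)` is the image of the root `(a, b)` of the Kronecker form `x² + y² - n x y` under the
reflection `(a, b) ↦ (n a - b, a)`. -/
lemma kronecker_root_reflect {n a b c : ℤ} (ha : 1 ≤ a) (hab : a < b)
    (hroot : a ^ 2 + b ^ 2 - n * a * b = 1) (hc : c + b = n * a) :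
    c < a ∧ c ^ 2 + a ^ 2 - n * c * a = 1 := by
  obtain rfl : c = n * a - b := by linarith
  constructor
  · nlinarith
  · linear_combination hroot

namespace Pencil

variable {k ι V W : Type*} [Field k] [AddCommGroup V] [Module k V] [AddCommGroup W] [Module k W]

def IsIndecomposable (α : ι → V →ₗ[k] W) : Prop :=
  ∀ (U₁ W₁ : Submodule k V) (U₂ W₂ : Submodule k W), IsCompl U₁ W₁ → IsCompl U₂ W₂ →
    (∀ i, U₁.map (α i) ≤ U₂) → (∀ i, W₁.map (α i) ≤ W₂) →
    (U₁ = ⊥ ∧ U₂ = ⊥) ∨ (W₁ = ⊥ ∧ W₂ = ⊥)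

def IsEigenvector (α : ι → V →ₗ[k] W) (v : V) : Prop :=
  v ≠ 0 ∧ finrank k (span k (Set.range fun i => α i v)) = 1

variable [Fintype ι] (α : ι → V →ₗ[k] W)

def total : (ι → V) →ₗ[k] W := ∑ i, α i ∘ₗ LinearMap.proj i

lemma total_apply (y : ι → V) : total α y = ∑ i, α i (y i) := by
  simp [total]

lemma total_single [DecidableEq ι] (i : ι) (x : V) : total α (Pi.single i x) = α i x := by
  simp [total_apply, Pi.single_apply, apply_ite]

/-- The Bernstein–Gelfand–Ponomarev reflection of the pencil.  On dimension vectors it sends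
`(a, b)` to `(|ι| a - b, a)` when `total α` is onto. -/
def reflect (i : ι) : (total α).ker →ₗ[k] V :=
  LinearMap.proj i ∘ₗ (total α).ker.subtype

@[simp]
lemma reflect_apply (i : ι) (x : (total α).ker) : reflect α i x = (x : ι → V) i :=
  rfl

variable {α}

lemma IsIndecomposable.range_total_eq_top [Nontrivial V] (hα : IsIndecomposable α) :
    (total α).range = ⊤ := by
  classical
  obtain ⟨C, hC⟩ := (total α).range.exists_isCompl
  have hαi (i : ι) : (⊤ : Submodule k V).map (α i) ≤ (total α).range := by
    rintro _ ⟨x, -, rfl⟩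
    exact ⟨Pi.single i x, total_single α i x⟩
  rcases hα ⊤ ⊥ _ C isCompl_top_bot hC hαi (fun i => by simp) with ⟨hV, -⟩ | ⟨-, hC₀⟩
  · exact absurd hV top_ne_bot
  · simpa [hC₀] using hC.sup_eq_top

lemma map_subtype_le_pi {U : Submodule k (total α).ker} {U' : Submodule k V}
    (h : ∀ i, U.map (reflect α i) ≤ U') :
    U.map (total α).ker.subtype ≤ pi Set.univ fun _ => U' := by
  rintro _ ⟨x, hx, rfl⟩ i -
  exact h i ⟨x, hx, rfl⟩

variable (α) in
lemma map_le_map_total_pi (U : Submodule k V) (i : ι) :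
    U.map (α i) ≤ (pi Set.univ fun _ => U).map (total α) := by
  classical
  rintro _ ⟨x, hx, rfl⟩
  exact ⟨Pi.single i x, le_comap_single_pi (fun _ => U) hx, total_single α i x⟩

/-- A splitting of the reflected pencil induces the splitting `Φ (U₂^ι) ⊕ Φ (W₂^ι)` of `W`. -/
lemma IsIndecomposable.reflect (hα : IsIndecomposable α) (hsurj : (total α).range = ⊤) :
    IsIndecomposable (reflect α) := by
  intro U₁ W₁ U₂ W₂ h₁ h₂ hU hW
  have hU' := map_subtype_le_pi hU
  have hW' := map_subtype_le_pi hW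
  let K := (total α).ker
  have hK : K ≤ (pi Set.univ fun _ => U₂) ⊓ K ⊔ (pi Set.univ fun _ => W₂) ⊓ K :=
    calc K = (U₁ ⊔ W₁).map K.subtype := by rw [h₁.sup_eq_top, map_subtype_top]
      _ = U₁.map K.subtype ⊔ W₁.map K.subtype := map_sup ..
      _ ≤ _ := sup_le_sup (le_inf hU' (map_subtype_le _ _)) (le_inf hW' (map_subtype_le _ _))
  have hcompl := isCompl_map_of_ker_le (LinearMap.range_eq_top.mp hsurj)
    (isCompl_pi_univ fun _ => h₂) hK
  rcases hα U₂ W₂ _ _ h₂ hcompl (map_le_map_total_pi α U₂) (map_le_map_total_pi α W₂) with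
    ⟨hU₂, -⟩ | ⟨hW₂, -⟩
  · exact .inl ⟨map_injective_of_injective K.injective_subtype (by simpa [hU₂] using hU'), hU₂⟩
  · exact .inr ⟨map_injective_of_injective K.injective_subtype (by simpa [hW₂] using hW'), hW₂⟩

lemma finrank_ker_total_add [FiniteDimensional k V] (hsurj : (total α).range = ⊤) :
    finrank k (total α).ker + finrank k W = Fintype.card ι * finrank k V := by
  have := (total α).finrank_range_add_finrank_ker
  rw [hsurj, finrank_top, Module.finrank_pi_fintype] at this
  simp only [Finset.sum_const, Finset.card_univ, smul_eq_mul] at this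
  omega

variable {v : V}

lemma IsEigenvector.exists_sum_smul_eq_zero (hv : IsEigenvector α v) (hι : 1 < Fintype.card ι) :
    ∃ μ : ι → k, ∑ i, μ i • α i v = 0 ∧ ∃ i, μ i ≠ 0 := by
  refine Fintype.not_linearIndependent_iff.mp fun hli => ?_
  have := linearIndependent_iff_card_eq_finrank_span.mp hli
  rw [Set.finrank, hv.2] at this
  omega

lemma IsEigenvector.exists_isEigenvector_reflect (hv : IsEigenvector α v)
    (hι : 1 < Fintype.card ι) : ∃ u, IsEigenvector (reflect α) u := by
  obtain ⟨μ, hμ, i₀, hi₀⟩ := hv.exists_sum_smul_eq_zero hι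
  have hu : (fun i => μ i • v) ∈ (total α).ker := by simpa [total_apply] using hμ
  refine ⟨⟨_, hu⟩, fun h => smul_ne_zero hi₀ hv.1 (congr_fun (congr_arg Subtype.val h) i₀), ?_⟩
  change finrank k (span k (Set.range fun i => μ i • v)) = 1
  rw [span_range_smul_eq_span_singleton hi₀, finrank_span_singleton hv.1]

end Pencil

universe u v

/-- Stated for `V W : Type (max u v)` so that the reflected pencil, whose domain is a subspace
of `ι → V`, stays in the same universe throughout the induction. -/
theorem Pencil.IsIndecomposable.not_isEigenvector {k : Type*} [Field k] {ι : Type v} [Fintype ι]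
    {V W : Type max u v} [AddCommGroup V] [Module k V] [FiniteDimensional k V]
    [AddCommGroup W] [Module k W] {α : ι → V →ₗ[k] W} (hα : IsIndecomposable α)
    (hι : 1 < Fintype.card ι) (hdim : finrank k V < finrank k W)
    (hroot : (finrank k V : ℤ) ^ 2 + (finrank k W : ℤ) ^ 2
      - Fintype.card ι * finrank k V * finrank k W = 1) (v : V) :
    ¬ IsEigenvector α v := by
  induction hd : finrank k V using Nat.strong_induction_on generalizing V W with
  | _ d ih =>
  intro hv
  have : Nontrivial V := nontrivial_of_ne v 0 hv.1
  have hsurj := hα.range_total_eq_top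
  obtain ⟨u, hu⟩ := hv.exists_isEigenvector_reflect hι
  have hpos : 0 < finrank k V := finrank_pos
  obtain ⟨hlt, hroot'⟩ := kronecker_root_reflect (c := finrank k (total α).ker) (by omega)
    (by exact_mod_cast hdim) hroot (by exact_mod_cast finrank_ker_total_add hsurj)
  exact ih (finrank k (total α).ker) (by omega) (hα.reflect hsurj) (by exact_mod_cast hlt)
    (by exact_mod_cast hroot') u rfl hu

/-- for `n ≥ 2`, a preprojective matrix pencil (an indecomposable
pencil `P = (a, b; α₁, …, α_n)` with `a < b` and `a² + b² − n·a·b = 1`) has no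
eigenvector: there is no nonzero `v ∈ k^a` with `span{α₁(v), …, α_n(v)}`
one-dimensional. -/
theorem preprojective_pencil_has_no_eigenvectors
    {k : Type*} [Field k] {n a b : ℕ} (hn : 2 ≤ n)
    (α : Fin n → ((Fin a → k) →ₗ[k] (Fin b → k)))
    (hab : a < b)
    (hroot : (a : ℤ) ^ 2 + (b : ℤ) ^ 2 - n * a * b = 1)
    (hind : ∀ (U₁ W₁ : Submodule k (Fin a → k)) (U₂ W₂ : Submodule k (Fin b → k)),
      IsCompl U₁ W₁ → IsCompl U₂ W₂ →
      (∀ i, U₁.map (α i) ≤ U₂) → (∀ i, W₁.map (α i) ≤ W₂) →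
      (U₁ = ⊥ ∧ U₂ = ⊥) ∨ (W₁ = ⊥ ∧ W₂ = ⊥)) :
    ¬ ∃ v : Fin a → k, v ≠ 0 ∧
        finrank k (span k (Set.range fun i => α i v)) = 1 := by
  rintro ⟨v, hv⟩
  exact Pencil.IsIndecomposable.not_isEigenvector hind (by rw [Fintype.card_fin]; omega)
    (by simpa using hab) (by simpa using hroot) v hv
end
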